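/- arXiv:1512.02849 — 13 statements merged into one kernel-verified Lean document; each statement's English description precedes it below -/
import Mathlib

section
/- Let Φ : H₂(ℂ) → H₂(ℂ) satisfy Φ(ABA) = Φ(A)Φ(B)Φ(A) for all A, B. If Φ(0) is invertible, then Φ(0) is a Hermitian involution and Φ(A) = Φ(0) for every A ∈ H₂(ℂ). -/
open Matrix

/-! Since `0 * B * 0 = 0`, every value satisfies `Φ 0 * Φ B * Φ 0 = Φ 0`; for invertible `Φ 0` this
forces `Φ B = (Φ 0)⁻¹`, and taking `B = 0` shows `(Φ 0)⁻¹ = Φ 0`. -/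

theorem IsUnit.mul_eq_one_of_mul_mul_eq_self {M : Type*} [Monoid M] {p x : M} (hp : IsUnit p)
    (h : p * x * p = p) : x * p = 1 :=
  hp.mul_left_cancel (by rw [← mul_assoc, h, mul_one])

theorem jtp_phi_zero_invertible
    (Φ : Matrix (Fin 2) (Fin 2) ℂ → Matrix (Fin 2) (Fin 2) ℂ)
    (hherm : ∀ A, A.IsHermitian → (Φ A).IsHermitian)
    (hjtp : ∀ A B, A.IsHermitian → B.IsHermitian → Φ (A * B * A) = Φ A * Φ B * Φ A)
    (hinv : IsUnit (Φ 0)) :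
    (Φ 0).IsHermitian ∧ Φ 0 * Φ 0 = 1 ∧ ∀ A, A.IsHermitian → Φ A = Φ 0 := by
  have h0 : (0 : Matrix (Fin 2) (Fin 2) ℂ).IsHermitian := isHermitian_zero
  have hsandwich : ∀ A, A.IsHermitian → Φ 0 * Φ A * Φ 0 = Φ 0 := fun A hA => by
    simpa using (hjtp 0 A h0 hA).symm
  have hsq : Φ 0 * Φ 0 = 1 := hinv.mul_eq_one_of_mul_mul_eq_self (hsandwich 0 h0)
  refine ⟨hherm 0 h0, hsq, fun A hA => hinv.mul_right_cancel ?_⟩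
  rw [hsq]
  exact hinv.mul_eq_one_of_mul_mul_eq_self (hsandwich A hA)
end

section
/- Let Φ : H₂(ℂ) → H₂(ℂ) be a J.T.P. homomorphism such that Φ(I) is invertible. Then Φ(I)² = I, and Φ(I) commutes with Φ(A) for every A ∈ H₂(ℂ). -/
open Matrix

/-! Taking `A = I` in the J.T.P. identity gives `Φ(I) Φ(B) Φ(I) = Φ(B)`. For `B = I` this says that
the unit `Φ(I)` satisfies `u³ = u`, hence `u² = 1`; then conjugation by the involution `u` fixes every
`Φ(B)`, i.e. `u` commutes with it. -/

theorem IsUnit.mul_self_eq_one_of_mul_self_mul_eq {M : Type*} [Monoid M] {u : M} (hu : IsUnit u)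
    (h : u * u * u = u) : u * u = 1 :=
  hu.mul_left_cancel <| by rw [mul_one, ← mul_assoc, h]

theorem commute_of_mul_self_eq_one_of_mul_mul_eq {M : Type*} [Monoid M] {u x : M}
    (hu : u * u = 1) (hx : u * x * u = x) : Commute u x :=
  calc u * x = u * x * (u * u) := by rw [hu, mul_one]
    _ = u * x * u * u := by rw [mul_assoc (u * x)]
    _ = x * u := by rw [hx]

theorem jtp_phi_identity_invertible_general
    (Φ : Matrix (Fin 2) (Fin 2) ℂ → Matrix (Fin 2) (Fin 2) ℂ)
    (hjtp : ∀ A B, A.IsHermitian → B.IsHermitian → Φ (A * B * A) = Φ A * Φ B * Φ A)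
    (hinv : IsUnit (Φ 1)) :
    Φ 1 * Φ 1 = 1 ∧ ∀ A, A.IsHermitian → Φ 1 * Φ A = Φ A * Φ 1 := by
  have hfix : ∀ B, B.IsHermitian → Φ 1 * Φ B * Φ 1 = Φ B := fun B hB => by
    simpa using (hjtp 1 B isHermitian_one hB).symm
  have hsq : Φ 1 * Φ 1 = 1 := hinv.mul_self_eq_one_of_mul_self_mul_eq (hfix 1 isHermitian_one)
  exact ⟨hsq, fun A hA => commute_of_mul_self_eq_one_of_mul_mul_eq hsq (hfix A hA)⟩

theorem jtp_phi_identity_invertible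
    (Φ : Matrix (Fin 2) (Fin 2) ℂ → Matrix (Fin 2) (Fin 2) ℂ)
    (hherm : ∀ A, A.IsHermitian → (Φ A).IsHermitian)
    (hjtp : ∀ A B, A.IsHermitian → B.IsHermitian → Φ (A * B * A) = Φ A * Φ B * Φ A)
    (hinv : IsUnit (Φ 1)) :
    Φ 1 * Φ 1 = 1 ∧ ∀ A, A.IsHermitian → Φ 1 * Φ A = Φ A * Φ 1 :=
  jtp_phi_identity_invertible_general Φ hjtp hinv
end

section
/- Let Φ : H₂(ℂ) → H₂(ℂ) be a J.T.P. homomorphism with Φ(0) = 0, Φ(I) = I, and Φ(J) ∈ {I, -I} where J = diag(1, -1). Then every Hermitian involution A with A ≠ ±I satisfies Φ(A) ∈ {I, -I}, and whenever A, B ∈ H₂(ℂ) are unitarily similar, Φ(A) = Φ(B). -/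
/-!
A Hermitian involution `A ≠ ±1` of `ℂ²` is traceless, i.e. a reflection. For Hermitian
involutions `A`, `K` with `(A + K)² = t • 1`, `t > 0`, the matrix `S = (A + K) / √t` is a Hermitian
involution with `S K S = A`; for a reflection `A ≠ -J` and `K = J` this holds with
`t = 2 + 2 A₀₀`, while `-J = X J X` for the swap `X`. Hence `Φ A = Φ S Φ J Φ S = ±(Φ S)² = ±Φ (S²) = ±1`.

A unitary `U` is a unit scalar times some `V ∈ SU(2)`, and `V = S T` is a product of two
reflections. Then `U B U* = S (T B T) S`, and `Φ` of it is `Φ B` because `Φ S, Φ T ∈ {1, -1}`.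
-/

open Matrix Complex

open scoped ComplexOrder ComplexConjugate

theorem add_mul_mul_add_eq_of_mul_self_eq_one {R : Type*} [Ring R] {a k : R}
    (ha : a * a = 1) (hk : k * k = 1) : (a + k) * k * (a + k) = (a + k) * (a + k) * a := by
  have h : (a + k) * k * (a + k) - (a + k) * (a + k) * a =
      a * (k * k) + k * k * k - a * a * a - k * (a * a) := by noncomm_ring
  rw [ha, hk] at h
  exact sub_eq_zero.mp (by rw [h]; noncomm_ring)

namespace Matrix

section RCLike

variable {n 𝕜 : Type*} [Fintype n] [DecidableEq n] [RCLike 𝕜]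

theorem IsHermitian.pos_of_mul_self_eq_smul_one {X : Matrix n n 𝕜} (hX : X.IsHermitian)
    (hX0 : X ≠ 0) {t : ℝ} (ht : X * X = (t : 𝕜) • 1) : 0 < t := by
  obtain ⟨i⟩ : Nonempty n := not_isEmpty_iff.mp fun _ => hX0 (Subsingleton.elim _ _)
  have hpsd := posSemidef_conjTranspose_mul_self X
  rw [hX.eq, ht] at hpsd
  refine lt_of_le_of_ne (by simpa using hpsd.diag_nonneg (i := i)) fun ht0 => hX0 ?_
  rw [← conjTranspose_mul_self_eq_zero, hX.eq, ht, ← ht0]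
  simp

theorem exists_isHermitian_involution_conj_eq {A K : Matrix n n 𝕜} (hA : A.IsHermitian)
    (hA2 : A * A = 1) (hK : K.IsHermitian) (hK2 : K * K = 1) (hAK0 : A + K ≠ 0) {t : ℝ}
    (hAK : (A + K) * (A + K) = (t : 𝕜) • 1) :
    ∃ S : Matrix n n 𝕜, S.IsHermitian ∧ S * S = 1 ∧ S * K * S = A := by
  have ht := (hA.add hK).pos_of_mul_self_eq_smul_one hAK0 hAK
  set s : 𝕜 := (((√t)⁻¹ : ℝ) : 𝕜)
  have hs : s * s * t = 1 := by
    simp only [s]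
    norm_cast
    field_simp
    exact (Real.sq_sqrt ht.le).symm
  refine ⟨s • (A + K), (hA.add hK).smul (RCLike.conj_ofReal _), ?_, ?_⟩
  · rw [smul_mul_smul_comm, hAK, smul_smul, hs, one_smul]
  · simp only [smul_mul_assoc, mul_smul_comm, smul_smul]
    rw [add_mul_mul_add_eq_of_mul_self_eq_one hA2 hK2, hAK, smul_mul_assoc, one_mul, smul_smul, hs,
      one_smul]

end RCLike

theorem trace_eq_zero_of_mul_self_eq_one {R : Type*} [CommRing R] [NoZeroDivisors R]
    {A : Matrix (Fin 2) (Fin 2) R} (hA2 : A * A = 1) (hA1 : A ≠ 1) (hAm1 : A ≠ -1) :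
    A.trace = 0 := by
  have e : ∀ i j, ∑ k, A i k * A k j = (1 : Matrix (Fin 2) (Fin 2) R) i j := fun i j => by
    rw [← hA2, mul_apply]
  have e00 := e 0 0
  have e01 := e 0 1
  have e10 := e 1 0
  have e11 := e 1 1
  simp only [Fin.sum_univ_two, one_apply_eq, one_apply_ne zero_ne_one, one_apply_ne one_ne_zero]
    at e00 e01 e10 e11
  rw [trace_fin_two]
  by_contra htr
  have hb : A 0 1 = 0 := (mul_eq_zero.mp
    (by linear_combination e01 : A 0 1 * (A 0 0 + A 1 1) = 0)).resolve_right htr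
  have hc : A 1 0 = 0 := (mul_eq_zero.mp
    (by linear_combination e10 : A 1 0 * (A 0 0 + A 1 1) = 0)).resolve_right htr
  have hd : A 1 1 = A 0 0 := by
    have := (mul_eq_zero.mp (by linear_combination e00 - e11 :
      (A 0 0 - A 1 1) * (A 0 0 + A 1 1) = 0)).resolve_right htr
    linear_combination -this
  rcases mul_self_eq_one_iff.mp (by linear_combination e00 - A 0 1 * hc : A 0 0 * A 0 0 = 1)
    with ha | ha
  · exact hA1 (by ext i j; fin_cases i <;> fin_cases j <;> simp [ha, hb, hc, hd])
  · exact hAm1 (by ext i j; fin_cases i <;> fin_cases j <;> simp [ha, hb, hc, hd])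

theorem diagonal_one_neg_one_mul_self {R : Type*} [Ring R] :
    diagonal ![(1 : R), -1] * diagonal ![1, -1] = 1 := by
  rw [diagonal_mul_diagonal, ← diagonal_one]
  congr 1
  ext i
  fin_cases i <;> simp

theorem add_diagonal_one_neg_one_mul_self {R : Type*} [CommRing R]
    {A : Matrix (Fin 2) (Fin 2) R} (hA2 : A * A = 1) (htr : A.trace = 0) :
    (A + diagonal ![1, -1]) * (A + diagonal ![1, -1]) = (2 + 2 * A 0 0) • 1 := by
  have hd : A 1 1 = -A 0 0 := by rw [trace_fin_two] at htr; linear_combination htr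
  rw [add_mul, mul_add, mul_add, hA2, diagonal_one_neg_one_mul_self]
  ext i j
  fin_cases i <;> fin_cases j <;> simp [mul_apply, Fin.sum_univ_two, hd] <;> ring

theorem isHermitian_diagonal_one_neg_one : (diagonal ![(1 : ℂ), -1]).IsHermitian :=
  isHermitian_diagonal_of_self_adjoint _ (by ext i; fin_cases i <;> simp)

def IsReflection (A : Matrix (Fin 2) (Fin 2) ℂ) : Prop :=
  A.IsHermitian ∧ A * A = 1 ∧ A.trace = 0

theorem IsReflection.exists_involution_conj_diagonal_eq {A : Matrix (Fin 2) (Fin 2) ℂ}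
    (hA : IsReflection A) :
    ∃ S : Matrix (Fin 2) (Fin 2) ℂ, S.IsHermitian ∧ S * S = 1 ∧ S * diagonal ![1, -1] * S = A := by
  obtain ⟨hAh, hA2, htr⟩ := hA
  by_cases hAJ : A = -diagonal ![1, -1]
  · refine ⟨!![0, 1; 1, 0], ?_, ?_, ?_⟩
    · ext i j; fin_cases i <;> fin_cases j <;> simp
    · ext i j; fin_cases i <;> fin_cases j <;> simp
    · rw [hAJ, diagonal_vec2]; ext i j; fin_cases i <;> fin_cases j <;> simp
  · refine exists_isHermitian_involution_conj_eq hAh hA2 isHermitian_diagonal_one_neg_one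
      diagonal_one_neg_one_mul_self (by rwa [Ne, add_eq_zero_iff_eq_neg])
      (t := 2 + 2 * (A 0 0).re) ?_
    rw [add_diagonal_one_neg_one_mul_self hA2 htr]
    simp [conj_eq_iff_re.mp (hAh.apply 0 0)]

theorem exists_smul_mem_specialUnitaryGroup {n : Type*} [Fintype n] [DecidableEq n]
    [Nonempty n] {U : Matrix n n ℂ} (hU : U ∈ unitaryGroup n ℂ) :
    ∃ c ∈ unitary ℂ, ∃ V ∈ specialUnitaryGroup n ℂ, U = c • V := by
  obtain ⟨c, hc⟩ := IsAlgClosed.exists_pow_nat_eq U.det (Fintype.card_pos (α := n))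
  have hcu : c ∈ unitary ℂ := by
    have hc1 : ‖c‖ = 1 := by
      rw [← pow_eq_one_iff_of_nonneg (norm_nonneg c) (Fintype.card_ne_zero (α := n)), ← norm_pow,
        hc]
      exact CStarRing.norm_of_mem_unitary (det_of_mem_unitary hU)
    rw [Unitary.mem_iff_star_mul_self, RCLike.star_def, conj_mul', hc1]
    simp
  refine ⟨c, hcu, star c • U, mem_specialUnitaryGroup_iff.mpr ⟨?_, ?_⟩, ?_⟩
  · exact Unitary.smul_mem_of_mem (Unitary.star_mem hcu) hU
  · rw [det_smul, ← hc, ← mul_pow, Unitary.star_mul_self_of_mem hcu, one_pow]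
  · rw [smul_smul, Unitary.mul_star_self_of_mem hcu, one_smul]

theorem exists_eq_of_mem_specialUnitaryGroup_fin_two {R : Type*} [CommRing R] [StarRing R]
    {V : Matrix (Fin 2) (Fin 2) R} (hV : V ∈ specialUnitaryGroup (Fin 2) R) :
    ∃ a b : R, V = !![a, b; -star b, star a] := by
  obtain ⟨hVu, hdet⟩ := mem_specialUnitaryGroup_iff.mp hV
  have hadj : star V = adjugate V := by
    calc star V = (adjugate V * V) * star V := by rw [adjugate_mul, hdet, one_smul, one_mul]
      _ = adjugate V := by rw [mul_assoc, Unitary.mul_star_self_of_mem hVu, mul_one]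
  rw [adjugate_fin_two] at hadj
  have h10 : V 1 0 = -star (V 0 1) := by
    have h := congrFun₂ hadj 1 0
    simp only [star_apply, of_apply, cons_val', cons_val_zero, cons_val_one, empty_val',
      cons_val_fin_one] at h
    exact neg_eq_iff_eq_neg.mp h.symm
  have h11 : V 1 1 = star (V 0 0) := by
    simpa [star_apply] using congrArg star (congrFun₂ hadj 1 1)
  refine ⟨V 0 0, V 0 1, ?_⟩
  ext i j
  fin_cases i <;> fin_cases j <;> simp [h10, h11]

theorem exists_isReflection_mul_eq_of_mem_specialUnitaryGroup {V : Matrix (Fin 2) (Fin 2) ℂ}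
    (hV : V ∈ specialUnitaryGroup (Fin 2) ℂ) :
    ∃ S T, IsReflection S ∧ IsReflection T ∧ V = S * T := by
  obtain ⟨α, β, hαβ⟩ := exists_eq_of_mem_specialUnitaryGroup_fin_two hV
  obtain ⟨u, hu, huβ⟩ : ∃ u : ℂ, conj u * u = 1 ∧ u * ‖β‖ = β := by
    refine ⟨exp (arg β * I), ?_, by rw [mul_comm]; exact norm_mul_exp_arg_mul_I β⟩
    rw [conj_mul', norm_exp_ofReal_mul_I]
    simp
  obtain ⟨S, hS⟩ : ∃ S : Matrix (Fin 2) (Fin 2) ℂ, S = !![0, u; star u, 0] := ⟨_, rfl⟩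
  obtain ⟨T, hT⟩ : ∃ T : Matrix (Fin 2) (Fin 2) ℂ,
      T = !![-(‖β‖ : ℂ), u * star α; star u * α, ‖β‖] := ⟨_, rfl⟩
  have hSr : IsReflection S := by
    refine ⟨?_, ?_, by simp [hS, trace_fin_two]⟩
    · ext i j; fin_cases i <;> fin_cases j <;> simp [hS]
    · rw [hS, mul_fin_two, one_fin_two]
      simp [mul_comm u, hu]
  have hVST : V = S * T := by
    rw [hαβ, hS, hT, mul_fin_two]
    ext i j
    fin_cases i <;> fin_cases j <;> simp
    · linear_combination -α * hu
    · exact huβ.symm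
    · simpa using (congrArg conj huβ).symm
    · linear_combination -conj α * hu
  have hTh : T.IsHermitian := by ext i j; fin_cases i <;> fin_cases j <;> simp [hT]
  have hTT : T * T = 1 := by
    have hSV : S * V = T := by rw [hVST, ← mul_assoc, hSr.2.1, one_mul]
    calc T * T = star (S * V) * (S * V) := by rw [hSV, star_eq_conjTranspose, hTh.eq]
      _ = star V * (star S * S) * V := by rw [star_mul]; noncomm_ring
      _ = 1 := by
        rw [star_eq_conjTranspose S, hSr.1.eq, hSr.2.1, mul_one,
          Unitary.star_mul_self_of_mem (specialUnitaryGroup_le_unitaryGroup hV)]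
  exact ⟨S, T, hSr, ⟨hTh, hTT, by simp [hT, trace_fin_two]⟩, hVST⟩

theorem exists_isReflection_conj_eq {U : Matrix (Fin 2) (Fin 2) ℂ}
    (hU : U ∈ unitaryGroup (Fin 2) ℂ) :
    ∃ S T, IsReflection S ∧ IsReflection T ∧ ∀ B, U * B * star U = S * (T * B * T) * S := by
  obtain ⟨c, hc, V, hV, rfl⟩ := exists_smul_mem_specialUnitaryGroup hU
  obtain ⟨S, T, hS, hT, rfl⟩ := exists_isReflection_mul_eq_of_mem_specialUnitaryGroup hV
  refine ⟨S, T, hS, hT, fun B => ?_⟩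
  rw [star_smul, star_mul, star_eq_conjTranspose S, star_eq_conjTranspose T, hS.1.eq, hT.1.eq,
    smul_mul_assoc, smul_mul_assoc, mul_smul_comm, smul_smul, Unitary.mul_star_self_of_mem hc,
    one_smul]
  noncomm_ring

end Matrix

section JTP

variable {n α : Type*} [Fintype n] [DecidableEq n] [Ring α] [StarRing α]

def IsJTPHom (Φ : Matrix n n α → Matrix n n α) : Prop :=
  ∀ A B, A.IsHermitian → B.IsHermitian → Φ (A * B * A) = Φ A * Φ B * Φ A

namespace IsJTPHom

variable {Φ : Matrix n n α → Matrix n n α}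

theorem map_mul_self_eq_one (hΦ : IsJTPHom Φ) (h1 : Φ 1 = 1) {A : Matrix n n α}
    (hA : A.IsHermitian) (hA2 : A * A = 1) : Φ A * Φ A = 1 := by
  simpa [hA2, h1] using (hΦ A 1 hA isHermitian_one).symm

theorem map_conj_eq_one_or_neg_one (hΦ : IsJTPHom Φ) (h1 : Φ 1 = 1) {S K : Matrix n n α}
    (hS : S.IsHermitian) (hS2 : S * S = 1) (hK : K.IsHermitian) (hΦK : Φ K = 1 ∨ Φ K = -1) :
    Φ (S * K * S) = 1 ∨ Φ (S * K * S) = -1 := by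
  rw [hΦ S K hS hK]
  rcases hΦK with h | h <;> simp [h, hΦ.map_mul_self_eq_one h1 hS hS2]

theorem map_conj_eq_of_map_eq_one_or_neg_one (hΦ : IsJTPHom Φ) {S B : Matrix n n α}
    (hS : S.IsHermitian) (hB : B.IsHermitian) (hΦS : Φ S = 1 ∨ Φ S = -1) :
    Φ (S * B * S) = Φ B := by
  rw [hΦ S B hS hB]
  rcases hΦS with h | h <;> simp [h]

end IsJTPHom

end JTP

namespace IsJTPHom

variable {Φ : Matrix (Fin 2) (Fin 2) ℂ → Matrix (Fin 2) (Fin 2) ℂ}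

theorem map_eq_one_or_neg_one_of_isReflection (hΦ : IsJTPHom Φ) (h1 : Φ 1 = 1)
    (hJ : Φ (diagonal ![1, -1]) = 1 ∨ Φ (diagonal ![1, -1]) = -1) {A : Matrix (Fin 2) (Fin 2) ℂ}
    (hA : IsReflection A) : Φ A = 1 ∨ Φ A = -1 := by
  obtain ⟨S, hS, hS2, rfl⟩ := hA.exists_involution_conj_diagonal_eq
  exact hΦ.map_conj_eq_one_or_neg_one h1 hS hS2 isHermitian_diagonal_one_neg_one hJ

theorem map_unitary_conj (hΦ : IsJTPHom Φ) (h1 : Φ 1 = 1)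
    (hJ : Φ (diagonal ![1, -1]) = 1 ∨ Φ (diagonal ![1, -1]) = -1)
    {U B : Matrix (Fin 2) (Fin 2) ℂ} (hU : U ∈ unitaryGroup (Fin 2) ℂ) (hB : B.IsHermitian) :
    Φ (U * B * star U) = Φ B := by
  obtain ⟨S, T, hS, hT, hconj⟩ := exists_isReflection_conj_eq hU
  have hTBT : (T * B * T).IsHermitian := by
    simpa [hT.1.eq] using isHermitian_conjTranspose_mul_mul T hB
  rw [hconj, hΦ.map_conj_eq_of_map_eq_one_or_neg_one hS.1 hTBT
      (hΦ.map_eq_one_or_neg_one_of_isReflection h1 hJ hS),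
    hΦ.map_conj_eq_of_map_eq_one_or_neg_one hT.1 hB
      (hΦ.map_eq_one_or_neg_one_of_isReflection h1 hJ hT)]

end IsJTPHom

theorem jtp_nontrivial_involution_to_scalar_general
    (Φ : Matrix (Fin 2) (Fin 2) ℂ → Matrix (Fin 2) (Fin 2) ℂ)
    (hjtp : ∀ A B, A.IsHermitian → B.IsHermitian → Φ (A * B * A) = Φ A * Φ B * Φ A)
    (h1 : Φ 1 = 1)
    (hJ : Φ (Matrix.diagonal ![(1 : ℂ), -1]) = 1 ∨ Φ (Matrix.diagonal ![(1 : ℂ), -1]) = -1) :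
    (∀ A : Matrix (Fin 2) (Fin 2) ℂ, A.IsHermitian → A * A = 1 → A ≠ 1 → A ≠ -1 →
        Φ A = 1 ∨ Φ A = -1) ∧
    (∀ A B : Matrix (Fin 2) (Fin 2) ℂ, A.IsHermitian → B.IsHermitian →
        (∃ U ∈ Matrix.unitaryGroup (Fin 2) ℂ, A = U * B * star U) → Φ A = Φ B) := by
  have hΦ : IsJTPHom Φ := hjtp
  refine ⟨fun A hA hA2 hA1 hAm1 => ?_, ?_⟩
  · exact hΦ.map_eq_one_or_neg_one_of_isReflection h1 hJ
      ⟨hA, hA2, trace_eq_zero_of_mul_self_eq_one hA2 hA1 hAm1⟩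
  · rintro _ B - hB ⟨U, hU, rfl⟩
    exact hΦ.map_unitary_conj h1 hJ hU hB

theorem jtp_nontrivial_involution_to_scalar
    (Φ : Matrix (Fin 2) (Fin 2) ℂ → Matrix (Fin 2) (Fin 2) ℂ)
    (hherm : ∀ A, A.IsHermitian → (Φ A).IsHermitian)
    (hjtp : ∀ A B, A.IsHermitian → B.IsHermitian → Φ (A * B * A) = Φ A * Φ B * Φ A)
    (h0 : Φ 0 = 0) (h1 : Φ 1 = 1)
    (hJ : Φ (Matrix.diagonal ![(1 : ℂ), -1]) = 1 ∨ Φ (Matrix.diagonal ![(1 : ℂ), -1]) = -1) :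
    (∀ A : Matrix (Fin 2) (Fin 2) ℂ, A.IsHermitian → A * A = 1 → A ≠ 1 → A ≠ -1 →
        Φ A = 1 ∨ Φ A = -1) ∧
    (∀ A B : Matrix (Fin 2) (Fin 2) ℂ, A.IsHermitian → B.IsHermitian →
        (∃ U ∈ Matrix.unitaryGroup (Fin 2) ℂ, A = U * B * star U) → Φ A = Φ B) :=
  jtp_nontrivial_involution_to_scalar_general Φ hjtp h1 hJ
end

section
/- Let Φ : H₂(ℂ) → H₂(ℂ) be a J.T.P. homomorphism with Φ(0) = 0, Φ(I) = I, and Φ(J) ∈ {I, -I} where J = diag(1, -1). Then Φ(A) = 0 for every A ∈ H₂(ℂ) with rank A = 1. -/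
/-!
Every rank-one Hermitian `A` is killed, `A * S * A = 0`, by a suitable off-diagonal Hermitian
unitary `S = !![0, b; conj b, 0]`: since `det A = 0`, the `2 × 2` identity
`A X A = tr (A X) • A - det A • adj X` reduces this to `tr (A S) = 0`, a condition on the
phase of `b`. Such an `S` is `M J M` for the Hermitian involution `M = (J + S) / √2`, so
`Φ S = Φ M * Φ J * Φ M = ± (Φ M) ^ 2 = ± Φ (M * M) = ± 1`. Hence
`± (Φ A) ^ 2 = Φ (A * S * A) = Φ 0 = 0`, and a Hermitian matrix with square zero vanishes.
-/

open Matrix ComplexConjugate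
open scoped ComplexOrder

theorem Complex.exists_norm_eq_one_mul_conj_add_eq_zero (r : ℂ) :
    ∃ b : ℂ, ‖b‖ = 1 ∧ r * conj b + conj r * b = 0 := by
  -- `set` keeps `u` opaque, so that the polar rewrite below only touches the factor `r`.
  set u := exp (r.arg * I)
  refine ⟨I * u, by simp [u], ?_⟩
  rw [← norm_mul_exp_arg_mul_I r]
  simp only [map_mul, conj_ofReal, conj_I]
  ring

namespace Matrix

theorem IsHermitian.eq_zero_of_mul_self_eq_zero {n R : Type*} [Fintype n] [PartialOrder R]
    [NonUnitalRing R] [StarRing R] [StarOrderedRing R] [NoZeroDivisors R]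
    {A : Matrix n n R} (hA : A.IsHermitian) (h : A * A = 0) : A = 0 :=
  conjTranspose_mul_self_eq_zero.mp (by rwa [hA.eq])

theorem det_eq_zero_of_rank_lt {n R : Type*} [Fintype n] [DecidableEq n] [CommRing R]
    [IsDomain R] {A : Matrix n n R} (h : A.rank < Fintype.card n) : A.det = 0 := by
  by_contra hA
  exact h.ne (rank_of_det_ne_zero hA)

theorem mul_mul_eq_trace_smul_sub_det_smul_adjugate_fin_two {R : Type*} [CommRing R]
    (A X : Matrix (Fin 2) (Fin 2) R) :
    A * X * A = (A * X).trace • A - A.det • X.adjugate := by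
  ext i j
  fin_cases i <;> fin_cases j <;>
    simp [mul_apply, Fin.sum_univ_two, trace_fin_two, det_fin_two, adjugate_fin_two] <;> ring

theorem exists_isHermitian_involution_mul_diagonal_mul_eq_antidiagonal {b : ℂ}
    (hb : ‖b‖ = 1) :
    ∃ M : Matrix (Fin 2) (Fin 2) ℂ, M.IsHermitian ∧ M * M = 1 ∧
      M * diagonal ![1, -1] * M = !![0, b; conj b, 0] := by
  have hbb : b * conj b = 1 := by
    rw [Complex.mul_conj, Complex.normSq_eq_norm_sq, hb]; norm_num
  set c : ℂ := (((√2)⁻¹ : ℝ) : ℂ)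
  have hc : c * c = 2⁻¹ := by
    rw [← Complex.ofReal_mul, ← mul_inv, Real.mul_self_sqrt zero_le_two]; norm_num
  refine ⟨!![c, c * b; c * conj b, -c], ?_, ?_, ?_⟩
  · ext i j; fin_cases i <;> fin_cases j <;> simp [conjTranspose_apply, c, mul_comm]
  · simp only [mul_fin_two, one_fin_two, EmbeddingLike.apply_eq_iff_eq, vecCons_inj, and_true]
    refine ⟨⟨?_, ?_⟩, ?_, ?_⟩
    · linear_combination (1 + b * conj b) * hc + 2⁻¹ * hbb
    · ring
    · ring
    · linear_combination (1 + b * conj b) * hc + 2⁻¹ * hbb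
  · simp only [diagonal_fin_two, cons_val_zero, cons_val_one, mul_fin_two,
      EmbeddingLike.apply_eq_iff_eq, vecCons_inj, and_true]
    refine ⟨⟨?_, ?_⟩, ?_, ?_⟩
    · linear_combination (-c * c) * hbb
    · linear_combination 2 * b * hc
    · linear_combination 2 * conj b * hc
    · linear_combination (c * c) * hbb

theorem IsHermitian.exists_mul_antidiagonal_mul_eq_zero {A : Matrix (Fin 2) (Fin 2) ℂ}
    (hA : A.IsHermitian) (hdet : A.det = 0) :
    ∃ b : ℂ, ‖b‖ = 1 ∧ A * !![0, b; conj b, 0] * A = 0 := by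
  obtain ⟨b, hb, hre⟩ := Complex.exists_norm_eq_one_mul_conj_add_eq_zero (A 0 1)
  have htr : (A * !![0, b; conj b, 0]).trace = 0 := by
    simp only [trace_fin_two, mul_apply, Fin.sum_univ_two, of_apply, cons_val', cons_val_zero,
      cons_val_one, cons_val_fin_one, mul_zero, zero_add, add_zero, ← hA.apply 1 0,
      Complex.star_def]
    linear_combination hre
  refine ⟨b, hb, ?_⟩
  rw [mul_mul_eq_trace_smul_sub_det_smul_adjugate_fin_two, htr, hdet, zero_smul, zero_smul,
    sub_zero]

end Matrix

theorem jtp_map_conj_eq_one_or_neg_one {n R : Type*} [Fintype n] [DecidableEq n] [Ring R]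
    [StarRing R] {Φ : Matrix n n R → Matrix n n R}
    (hjtp : ∀ A B, A.IsHermitian → B.IsHermitian → Φ (A * B * A) = Φ A * Φ B * Φ A)
    (h1 : Φ 1 = 1) {J M : Matrix n n R} (hJ : J.IsHermitian) (hΦJ : Φ J = 1 ∨ Φ J = -1)
    (hM : M.IsHermitian) (hMM : M * M = 1) :
    Φ (M * J * M) = 1 ∨ Φ (M * J * M) = -1 := by
  have hΦM : Φ M * Φ M = 1 := by
    simpa [hMM, h1] using (hjtp M 1 hM isHermitian_one).symm
  rw [hjtp M J hM hJ]
  rcases hΦJ with h | h <;> simp [h, hΦM]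

theorem jtp_map_eq_zero_of_mul_mul_eq_zero {n R : Type*} [Fintype n] [DecidableEq n]
    [PartialOrder R] [Ring R] [StarRing R] [StarOrderedRing R] [NoZeroDivisors R]
    {Φ : Matrix n n R → Matrix n n R} (hherm : ∀ A, A.IsHermitian → (Φ A).IsHermitian)
    (hjtp : ∀ A B, A.IsHermitian → B.IsHermitian → Φ (A * B * A) = Φ A * Φ B * Φ A)
    (h0 : Φ 0 = 0) {A S : Matrix n n R} (hA : A.IsHermitian) (hS : S.IsHermitian)
    (hΦS : Φ S = 1 ∨ Φ S = -1) (hASA : A * S * A = 0) : Φ A = 0 := by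
  have hsq : Φ A * Φ A = 0 := by
    have h := hjtp A S hA hS
    rw [hASA, h0] at h
    rcases hΦS with hΦS | hΦS <;> simpa [hΦS, eq_comm] using h
  exact (hherm A hA).eq_zero_of_mul_self_eq_zero hsq

theorem jtp_map_antidiagonal_eq_one_or_neg_one
    {Φ : Matrix (Fin 2) (Fin 2) ℂ → Matrix (Fin 2) (Fin 2) ℂ}
    (hjtp : ∀ A B, A.IsHermitian → B.IsHermitian → Φ (A * B * A) = Φ A * Φ B * Φ A)
    (h1 : Φ 1 = 1) (hJ : Φ (diagonal ![1, -1]) = 1 ∨ Φ (diagonal ![1, -1]) = -1)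
    {b : ℂ} (hb : ‖b‖ = 1) :
    Φ !![0, b; conj b, 0] = 1 ∨ Φ !![0, b; conj b, 0] = -1 := by
  obtain ⟨M, hM, hMM, hMJM⟩ :=
    exists_isHermitian_involution_mul_diagonal_mul_eq_antidiagonal hb
  have hJherm : (diagonal ![(1 : ℂ), -1]).IsHermitian :=
    isHermitian_diagonal_of_self_adjoint _ (by ext i; fin_cases i <;> simp)
  rw [← hMJM]
  exact jtp_map_conj_eq_one_or_neg_one hjtp h1 hJherm hJ hM hMM

theorem jtp_rank_one_to_zero
    (Φ : Matrix (Fin 2) (Fin 2) ℂ → Matrix (Fin 2) (Fin 2) ℂ)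
    (hherm : ∀ A, A.IsHermitian → (Φ A).IsHermitian)
    (hjtp : ∀ A B, A.IsHermitian → B.IsHermitian → Φ (A * B * A) = Φ A * Φ B * Φ A)
    (h0 : Φ 0 = 0) (h1 : Φ 1 = 1)
    (hJ : Φ (Matrix.diagonal ![(1 : ℂ), -1]) = 1 ∨ Φ (Matrix.diagonal ![(1 : ℂ), -1]) = -1) :
    ∀ A : Matrix (Fin 2) (Fin 2) ℂ, A.IsHermitian → A.rank = 1 → Φ A = 0 := by
  intro A hA hrank
  obtain ⟨b, hb, hASA⟩ :=
    hA.exists_mul_antidiagonal_mul_eq_zero (det_eq_zero_of_rank_lt (by simp [hrank]))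
  have hS : (!![0, b; conj b, 0] : Matrix (Fin 2) (Fin 2) ℂ).IsHermitian := by
    ext i j; fin_cases i <;> fin_cases j <;> simp
  exact jtp_map_eq_zero_of_mul_mul_eq_zero hherm hjtp h0 hA hS
    (jtp_map_antidiagonal_eq_one_or_neg_one hjtp h1 hJ hb) hASA
end

section
/- Let Φ : H₂(ℂ) → H₂(ℂ) be a J.T.P. homomorphism with Φ(0) = 0 and Φ(I) = I, and suppose there exists A ∈ H₂(ℂ) with rank A = 1 and Φ(A) ≠ 0. Then rank Φ(B) = 1 for every B ∈ H₂(ℂ) with rank B = 1. -/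
/-!
Write a rank-one Hermitian matrix as `l • v v*` with `v` a unit vector. If `Φ` kills one
rank-one Hermitian matrix it kills all of them: from `Φ (c • P) = 0` the sandwiches
`(c • P) (d • P) (c • P)` give every real multiple of `P`, and another rank-one projection
`R = w w*` is reached either as `R P R = |⟪v, w⟫|² • R` or, when `v ⊥ w`, as `S P S` with
`S = w v* + v w*`. Nondegeneracy thus forces `Φ B ≠ 0`. If `Φ B` were invertible, then
`B Q B = 0` for the projection `Q` onto `v⊥` would give `Φ Q = 0`, hence `Φ B = 0`. So `Φ B` is
a nonzero singular `2 × 2` matrix, i.e. of rank one.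
-/

open Matrix

namespace Matrix

section Rank

variable {K m n : Type*} [Field K] [Fintype n]

theorem eq_zero_of_rank_eq_zero {M : Matrix m n K} (h : M.rank = 0) : M = 0 := by
  rw [rank, Submodule.finrank_eq_zero, LinearMap.range_eq_bot] at h
  classical
  exact toLin'.injective (by rw [toLin'_apply', h, map_zero])

theorem isUnit_of_rank_eq_card [DecidableEq n] {M : Matrix n n K}
    (h : M.rank = Fintype.card n) : IsUnit M := by
  rw [← mulVec_surjective_iff_isUnit, ← coe_mulVecLin, ← LinearMap.range_eq_top]
  exact Submodule.eq_top_of_finrank_eq (h.trans (Module.finrank_fintype_fun_eq_card K).symm)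

theorem rank_eq_one_of_ne_zero_of_det_eq_zero {M : Matrix (Fin 2) (Fin 2) K} (hM : M ≠ 0)
    (hdet : M.det = 0) : M.rank = 1 := by
  have hle : M.rank ≤ 2 := by simpa using M.rank_le_card_width
  have hne0 : M.rank ≠ 0 := fun h => hM (eq_zero_of_rank_eq_zero h)
  have hne2 : M.rank ≠ 2 := fun h => by
    simpa [hdet] using (isUnit_iff_isUnit_det M).mp (isUnit_of_rank_eq_card (by simpa using h))
  omega

end Rank

variable {𝕜 n : Type*} [RCLike 𝕜]

theorem isHermitian_vecMulVec_star (v : n → 𝕜) : (vecMulVec v (star v)).IsHermitian := by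
  rw [IsHermitian, conjTranspose_vecMulVec, star_star]

variable [Fintype n]

theorem isIdempotentElem_vecMulVec_star {v : n → 𝕜} (hv : star v ⬝ᵥ v = 1) :
    IsIdempotentElem (vecMulVec v (star v)) := by
  simp [IsIdempotentElem, vecMulVec_mul_vecMulVec, hv]

theorem IsHermitian.exists_eq_smul_vecMulVec_of_rank_eq_one [DecidableEq n] {A : Matrix n n 𝕜}
    (hA : A.IsHermitian) (h : A.rank = 1) :
    ∃ (l : ℝ) (v : n → 𝕜), l ≠ 0 ∧ star v ⬝ᵥ v = 1 ∧ A = l • vecMulVec v (star v) := by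
  rw [hA.rank_eq_card_non_zero_eigs, Fintype.card_eq_one_iff] at h
  obtain ⟨⟨i, hi⟩, hunique⟩ := h
  have hzero : ∀ j, j ≠ i → hA.eigenvalues j = 0 := fun j hj => by
    by_contra hj0
    exact hj (congrArg Subtype.val (hunique ⟨j, hj0⟩))
  set v : n → 𝕜 := ⇑(hA.eigenvectorBasis i)
  refine ⟨hA.eigenvalues i, v, hi, ?_, ?_⟩
  · rw [dotProduct_comm, ← EuclideanSpace.inner_eq_star_dotProduct, inner_self_eq_norm_sq_to_K,
      hA.eigenvectorBasis.orthonormal.1 i]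
    simp
  · have hD : diagonal (RCLike.ofReal ∘ hA.eigenvalues) =
        hA.eigenvalues i • vecMulVec (Pi.single i (1 : 𝕜)) (Pi.single i 1) := by
      ext j k
      by_cases hji : j = i
      · subst hji
        by_cases hjk : j = k
        · subst hjk
          simp [RCLike.real_smul_eq_coe_mul, vecMulVec_apply]
        · simp [diagonal_apply_ne _ hjk, vecMulVec_apply, Ne.symm hjk]
      · simp [diagonal_apply, vecMulVec_apply, hji, hzero j hji]
    have hsingle : star (Pi.single i 1 : n → 𝕜) = Pi.single i 1 := by simp
    conv_lhs => rw [hA.spectral_theorem, Unitary.conjStarAlgAut_apply, hD]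
    rw [mul_smul_comm, smul_mul_assoc, mul_vecMulVec, vecMulVec_mul, eigenvectorUnitary_mulVec,
      star_eq_conjTranspose, ← hsingle, ← star_mulVec, eigenvectorUnitary_mulVec]

theorem exists_star_dotProduct_eq_zero_fin_two {v : Fin 2 → 𝕜} (hv : star v ⬝ᵥ v = 1) :
    ∃ q : Fin 2 → 𝕜, star q ⬝ᵥ q = 1 ∧ star v ⬝ᵥ q = 0 := by
  refine ⟨![-star (v 1), star (v 0)], ?_, ?_⟩
  · simp [dotProduct, Fin.sum_univ_two] at hv ⊢
    linear_combination hv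
  · simp [dotProduct, Fin.sum_univ_two]
    ring

end Matrix

variable {𝕜 n : Type*} [RCLike 𝕜] [Fintype n]

def IsJordanTripleProductHom (Φ : Matrix n n 𝕜 → Matrix n n 𝕜) : Prop :=
  ∀ A B, A.IsHermitian → B.IsHermitian → Φ (A * B * A) = Φ A * Φ B * Φ A

namespace IsJordanTripleProductHom

variable {Φ : Matrix n n 𝕜 → Matrix n n 𝕜} (hΦ : IsJordanTripleProductHom Φ)
include hΦ

theorem map_smul_eq_zero_of_isIdempotentElem {P : Matrix n n 𝕜} (hP : P.IsHermitian)
    (hPP : IsIdempotentElem P) {c : ℝ} (hc : c ≠ 0) (h : Φ (c • P) = 0) (t : ℝ) :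
    Φ (t • P) = 0 := by
  have hsandwich : (c • P) * ((t / c ^ 2) • P) * (c • P) = t • P := by
    simp only [smul_mul_assoc, mul_smul_comm, smul_smul, hPP.eq]
    congr 1
    field_simp
  rw [← hsandwich, hΦ _ _ (hP.smul (.all c)) (hP.smul (.all _)), h, zero_mul, mul_zero]

theorem map_smul_vecMulVec_eq_zero {v w : n → 𝕜} (hv : star v ⬝ᵥ v = 1)
    (hw : star w ⬝ᵥ w = 1) {l : ℝ} (hl : l ≠ 0) (h : Φ (l • vecMulVec v (star v)) = 0)
    (t : ℝ) : Φ (t • vecMulVec w (star w)) = 0 := by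
  set P := vecMulVec v (star v)
  set R := vecMulVec w (star w)
  have hP : Φ P = 0 := by
    simpa using map_smul_eq_zero_of_isIdempotentElem hΦ (isHermitian_vecMulVec_star v)
      (isIdempotentElem_vecMulVec_star hv) hl h 1
  have hwv : star w ⬝ᵥ v = star (star v ⬝ᵥ w) := star_dotProduct _ _
  by_cases hvw : star v ⬝ᵥ w = 0
  · set S := vecMulVec w (star v) + vecMulVec v (star w)
    have hS : S.IsHermitian := by
      rw [IsHermitian, conjTranspose_add, conjTranspose_vecMulVec, conjTranspose_vecMulVec,
        star_star, star_star, add_comm]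
    have hSPS : S * P * S = R := by
      simp [S, P, R, add_mul, mul_add, vecMulVec_mul_vecMulVec, hv, hvw, hwv]
    have hR : Φ R = 0 := by
      rw [← hSPS, hΦ _ _ hS (isHermitian_vecMulVec_star v), hP, mul_zero, zero_mul]
    exact map_smul_eq_zero_of_isIdempotentElem hΦ (isHermitian_vecMulVec_star w)
      (isIdempotentElem_vecMulVec_star hw) one_ne_zero (by rwa [one_smul]) t
  · have hRPR : R * P * R = (‖star v ⬝ᵥ w‖ ^ 2 : ℝ) • R := by
      simp only [R, P, vecMulVec_mul_vecMulVec, vecMulVec_smul, smul_mul_assoc, smul_smul, hwv]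
      rw [RCLike.real_smul_eq_coe_smul (K := 𝕜), RCLike.star_def, RCLike.conj_mul]
      push_cast
      rfl
    refine map_smul_eq_zero_of_isIdempotentElem hΦ (isHermitian_vecMulVec_star w)
      (isIdempotentElem_vecMulVec_star hw) (pow_ne_zero 2 (norm_ne_zero_iff.mpr hvw)) ?_ t
    rw [← hRPR, hΦ _ _ (isHermitian_vecMulVec_star w) (isHermitian_vecMulVec_star v), hP,
      mul_zero, zero_mul]

theorem det_map_smul_vecMulVec_eq_zero [DecidableEq n] (h0 : Φ 0 = 0) {v q : n → 𝕜}
    (hv : star v ⬝ᵥ v = 1) (hq : star q ⬝ᵥ q = 1) (hvq : star v ⬝ᵥ q = 0) (l : ℝ) :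
    (Φ (l • vecMulVec v (star v))).det = 0 := by
  have : Nonempty n := by
    by_contra hn
    rw [not_nonempty_iff] at hn
    simp [dotProduct] at hq
  set B := l • vecMulVec v (star v)
  set Q := vecMulVec q (star q)
  by_contra hdet
  have hu : IsUnit (Φ B) := (isUnit_iff_isUnit_det _).mpr (isUnit_iff_ne_zero.mpr hdet)
  have hBQB : B * Q * B = 0 := by
    simp [B, Q, vecMulVec_mul_vecMulVec, hvq]
  have hQ : Φ Q = 0 := by
    have h := hΦ B Q ((isHermitian_vecMulVec_star v).smul (.all l)) (isHermitian_vecMulVec_star q)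
    rw [hBQB, h0] at h
    exact hu.mul_right_eq_zero.mp (hu.mul_left_eq_zero.mp h.symm)
  have hB : Φ B = 0 := map_smul_vecMulVec_eq_zero hΦ hq hv one_ne_zero (by rwa [one_smul]) l
  exact hdet (by rw [hB, det_zero])

end IsJordanTripleProductHom

theorem jtp_nondegenerate_rank_one_general
    (Φ : Matrix (Fin 2) (Fin 2) ℂ → Matrix (Fin 2) (Fin 2) ℂ)
    (hjtp : ∀ A B, A.IsHermitian → B.IsHermitian → Φ (A * B * A) = Φ A * Φ B * Φ A)
    (h0 : Φ 0 = 0)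
    (hnd : ∃ A : Matrix (Fin 2) (Fin 2) ℂ, A.IsHermitian ∧ A.rank = 1 ∧ Φ A ≠ 0) :
    ∀ B : Matrix (Fin 2) (Fin 2) ℂ, B.IsHermitian → B.rank = 1 → (Φ B).rank = 1 := by
  have hΦ : IsJordanTripleProductHom Φ := hjtp
  obtain ⟨A, hA, hA1, hΦA⟩ := hnd
  obtain ⟨m, r, -, hr, rfl⟩ := hA.exists_eq_smul_vecMulVec_of_rank_eq_one hA1
  intro B hB hB1
  obtain ⟨l, v, hl, hv, rfl⟩ := hB.exists_eq_smul_vecMulVec_of_rank_eq_one hB1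
  obtain ⟨q, hq, hvq⟩ := exists_star_dotProduct_eq_zero_fin_two hv
  exact rank_eq_one_of_ne_zero_of_det_eq_zero
    (fun h => hΦA (hΦ.map_smul_vecMulVec_eq_zero hv hr hl h m))
    (hΦ.det_map_smul_vecMulVec_eq_zero h0 hv hq hvq l)

theorem jtp_nondegenerate_rank_one
    (Φ : Matrix (Fin 2) (Fin 2) ℂ → Matrix (Fin 2) (Fin 2) ℂ)
    (hherm : ∀ A, A.IsHermitian → (Φ A).IsHermitian)
    (hjtp : ∀ A B, A.IsHermitian → B.IsHermitian → Φ (A * B * A) = Φ A * Φ B * Φ A)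
    (h0 : Φ 0 = 0) (h1 : Φ 1 = 1)
    (hnd : ∃ A : Matrix (Fin 2) (Fin 2) ℂ, A.IsHermitian ∧ A.rank = 1 ∧ Φ A ≠ 0) :
    ∀ B : Matrix (Fin 2) (Fin 2) ℂ, B.IsHermitian → B.rank = 1 → (Φ B).rank = 1 :=
  jtp_nondegenerate_rank_one_general Φ hjtp h0 hnd
end

section
/- Let Φ : H₂(ℂ) → H₂(ℂ) be a J.T.P. homomorphism with Φ(0) = 0 and Φ(I) = I, and suppose there exists λ ∈ ℝ such that Φ(λI) is not a scalar matrix. Then there is a unitary U ∈ M₂(ℂ) and J.T.P. homomorphisms φ₁, φ₂ : H₂(ℂ) → ℝ such that Φ(A) = U · diag(φ₁(A), φ₂(A)) · U* for all A ∈ H₂(ℂ). -/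
/-!
Conjugating by a unitary that diagonalises `Φ(λI) = diag(α, β)`, `α ≠ β`, one may assume that
this image is diagonal. Since `λI` is central, `A (λI B λI) A = λI (A B A) λI`, so `X = Φ(A)`
satisfies `X D² X = D X² D` and `X D³ X = D (X D X) D` with `D = diag(α, β)`; comparing entries,
`X` is diagonal or has zero diagonal. Hence every square `Φ(C)² = Φ(C²)` is diagonal, and so is
the image of every symmetry `K` (`K² = I`): otherwise `Φ(K)² = I` and `Φ(K) D Φ(K) = D` would
force `α = β`. A Hermitian `A` factors as `C² K C²` with `C = |A|^{1/4}` and `K` a sign of `A`,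
so `Φ(A) = Φ(C)² Φ(K) Φ(C)²` is diagonal, and its diagonal entries are J.T.P. homomorphisms.
-/

open Matrix

def IsJordanTripleHom {n 𝕜 R : Type*} [Fintype n] [RCLike 𝕜] [Mul R]
    (Φ : Matrix n n 𝕜 → R) : Prop :=
  ∀ A B, A.IsHermitian → B.IsHermitian → Φ (A * B * A) = Φ A * Φ B * Φ A

namespace Matrix

variable {n 𝕜 : Type*} [RCLike 𝕜]

theorem isHermitian_ofReal_smul_one [DecidableEq n] (c : ℝ) :
    ((c : 𝕜) • (1 : Matrix n n 𝕜)).IsHermitian :=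
  isHermitian_one.smul (RCLike.conj_ofReal c)

theorem IsHermitian.mul_mul [Fintype n] {A B : Matrix n n 𝕜} (hA : A.IsHermitian)
    (hB : B.IsHermitian) : (A * B * A).IsHermitian := by
  simpa only [hA.eq] using isHermitian_conjTranspose_mul_mul A hB

theorem IsDiag.mul [Fintype n] [DecidableEq n] {α : Type*} [NonUnitalNonAssocSemiring α]
    {A B : Matrix n n α} (hA : A.IsDiag) (hB : B.IsDiag) : (A * B).IsDiag := by
  rw [← hA.diagonal_diag, ← hB.diagonal_diag, diagonal_mul_diagonal]
  exact isDiag_diagonal _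

theorem IsHermitian.eq_diagonal_re_of_isDiag [DecidableEq n] {A : Matrix n n 𝕜}
    (hA : A.IsHermitian) (hd : A.IsDiag) : A = diagonal fun i => (RCLike.re (A i i) : 𝕜) := by
  conv_lhs => rw [← hd.diagonal_diag, ← hA.coe_re_diag]
  rfl

theorem continuousOn_spectrum_real [Fintype n] [DecidableEq n] (f : ℝ → ℝ)
    (A : Matrix n n 𝕜) : ContinuousOn f (spectrum ℝ A) := by
  -- the spectrum of a matrix is finite, so it carries the discrete topology
  rw [continuousOn_iff_continuous_domRestrict]
  fun_prop

theorem IsHermitian.exists_eq_sq_mul_mul_sq [Fintype n] [DecidableEq n] {A : Matrix n n 𝕜}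
    (hA : A.IsHermitian) :
    ∃ C K : Matrix n n 𝕜, C.IsHermitian ∧ K.IsHermitian ∧ K * K = 1 ∧
      A = C * C * K * (C * C) := by
  let g : ℝ → ℝ := fun x => √(√|x|)
  let s : ℝ → ℝ := fun x => if 0 ≤ x then 1 else -1
  have hg := continuousOn_spectrum_real g A
  have hs := continuousOn_spectrum_real s A
  refine ⟨cfc g A, cfc s A, cfc_predicate g A, cfc_predicate s A, ?_, ?_⟩
  · rw [← cfc_mul s s A, ← cfc_const_one ℝ A]
    congr 1
    funext x
    by_cases hx : 0 ≤ x <;> simp [s, hx]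
  · rw [← cfc_mul g g A, ← cfc_mul _ s A, ← cfc_mul _ (fun x => g x * g x) A]
    conv_lhs => rw [← cfc_id' ℝ A hA.isSelfAdjoint]
    congr 1
    funext x
    have hgg : g x * g x = √|x| := Real.mul_self_sqrt (Real.sqrt_nonneg _)
    simp only [hgg]
    by_cases hx : 0 ≤ x
    · simp [s, hx, abs_of_nonneg hx]
    · simp only [s, hx, if_false]
      nlinarith [Real.mul_self_sqrt (abs_nonneg x), abs_of_neg (not_le.mp hx)]

variable {K : Type*}

theorem isDiag_mul_self_of_diag_eq_zero [NonUnitalNonAssocSemiring K]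
    {X : Matrix (Fin 2) (Fin 2) K} (hX : X.diag = 0) : (X * X).IsDiag := by
  have h0 : X 0 0 = 0 := congrFun hX 0
  have h1 : X 1 1 = 0 := congrFun hX 1
  intro i j hij
  fin_cases i <;> fin_cases j <;> simp_all [mul_apply, Fin.sum_univ_two]

theorem eq_of_diag_eq_zero_of_mul_self_eq_one [CommRing K] {Y : Matrix (Fin 2) (Fin 2) K}
    {d : Fin 2 → K} (hY : Y.diag = 0) (hY2 : Y * Y = 1) (hd : Y * diagonal d * Y = diagonal d) :
    d 0 = d 1 := by
  have h0 : Y 0 0 = 0 := congrFun hY 0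
  have e1 := congrFun₂ hY2 0 0
  have e2 := congrFun₂ hd 0 0
  simp [mul_apply, Fin.sum_univ_two, h0] at e1 e2
  linear_combination -e2 + d 1 * e1

theorem isDiag_or_diag_eq_zero [Field K] [StarRing K] {X : Matrix (Fin 2) (Fin 2) K}
    {d : Fin 2 → K} (hX : X.IsHermitian) (hd : d 0 ≠ d 1)
    (h2 : X * (diagonal d * diagonal d) * X = diagonal d * (X * X) * diagonal d)
    (h3 : X * (diagonal d * diagonal d * diagonal d) * X =
      diagonal d * (X * diagonal d * X) * diagonal d) :
    X.IsDiag ∨ X.diag = 0 := by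
  have hX10 : X 1 0 = star (X 0 1) := (hX.apply 1 0).symm
  by_cases hz : X 0 1 = 0
  · left
    intro i j hij
    fin_cases i <;> fin_cases j <;> simp_all
  right
  have hw : X 1 0 ≠ 0 := by rwa [hX10, star_ne_zero]
  have hd' : d 0 - d 1 ≠ 0 := sub_ne_zero.2 hd
  have e1 := congrFun₂ h2 0 0
  have e2 := congrFun₂ h2 0 1
  have e3 := congrFun₂ h3 0 1
  simp only [mul_apply, Fin.sum_univ_two, diagonal_apply_eq, diagonal_apply_ne _ zero_ne_one,
    diagonal_apply_ne _ one_ne_zero, mul_zero, zero_mul, add_zero, zero_add] at e1 e2 e3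
  have hsum : d 0 + d 1 = 0 := by
    have : (d 0 - d 1) * (X 0 1 * X 1 0) * (d 0 + d 1) = 0 := by linear_combination -e1
    simpa [hd', hz, hw] using this
  have hlin : d 0 * X 0 0 = d 1 * X 1 1 := by
    have : (d 0 - d 1) * X 0 1 * (d 0 * X 0 0 - d 1 * X 1 1) = 0 := by linear_combination e2
    simpa [hd', hz, sub_eq_zero] using this
  have hquad : d 0 ^ 2 * X 0 0 = d 1 ^ 2 * X 1 1 := by
    have : (d 0 - d 1) * X 0 1 * (d 0 ^ 2 * X 0 0 - d 1 ^ 2 * X 1 1) = 0 := by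
      linear_combination e3
    simpa [hd', hz, sub_eq_zero] using this
  have hd0 : d 0 ≠ 0 := fun h => hd (by linear_combination 2 * h - hsum)
  have hd1 : d 1 ≠ 0 := fun h => hd (by linear_combination hsum - 2 * h)
  have ha : (d 0 - d 1) * d 0 * X 0 0 = 0 := by linear_combination hquad - d 1 * hlin
  have hb : (d 0 - d 1) * d 1 * X 1 1 = 0 := by linear_combination hquad - d 0 * hlin
  ext i
  fin_cases i
  · simpa [hd', hd0] using ha
  · simpa [hd', hd1] using hb

theorem IsHermitian.exists_unitary_conj_eq_diagonal
    {M : Matrix (Fin 2) (Fin 2) 𝕜} (hM : M.IsHermitian) (hns : ¬∃ c : ℝ, M = (c : 𝕜) • 1) :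
    ∃ U ∈ unitaryGroup (Fin 2) 𝕜, ∃ d : Fin 2 → 𝕜, d 0 ≠ d 1 ∧ star U * M * U = diagonal d := by
  set U : Matrix (Fin 2) (Fin 2) 𝕜 := hM.eigenvectorUnitary.1
  have hUM : star U * M * U = diagonal (RCLike.ofReal ∘ hM.eigenvalues) := by
    simpa [Unitary.conjStarAlgAut_apply] using hM.conjStarAlgAut_star_eigenvectorUnitary
  refine ⟨U, hM.eigenvectorUnitary.2, _, fun h01 => hns ⟨hM.eigenvalues 0, ?_⟩, hUM⟩
  have hdiag : diagonal (RCLike.ofReal ∘ hM.eigenvalues) =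
      ((hM.eigenvalues 0 : ℝ) : 𝕜) • (1 : Matrix (Fin 2) (Fin 2) 𝕜) := by
    rw [smul_one_eq_diagonal]
    congr 1
    funext i
    fin_cases i
    · rfl
    · exact h01.symm
  have hUU : U * star U = 1 := Unitary.mul_star_self_of_mem hM.eigenvectorUnitary.2
  calc M = U * star U * M * (U * star U) := by rw [hUU, one_mul, mul_one]
    _ = U * (star U * M * U) * star U := by simp only [mul_assoc]
    _ = _ := by rw [hUM, hdiag, mul_smul_comm, smul_mul_assoc, mul_one, hUU]

end Matrix

namespace IsJordanTripleHom

variable {n m 𝕜 : Type*} [Fintype n] [RCLike 𝕜]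

theorem map_mul_self [DecidableEq n] {R : Type*} [MulOneClass R] {Φ : Matrix n n 𝕜 → R}
    (hΦ : IsJordanTripleHom Φ) (h1 : Φ 1 = 1) {A : Matrix n n 𝕜}
    (hA : A.IsHermitian) : Φ (A * A) = Φ A * Φ A := by
  simpa [h1] using hΦ A 1 hA isHermitian_one

theorem map_smul_one_comm [DecidableEq n] {R : Type*} [Mul R] {Φ : Matrix n n 𝕜 → R}
    (hΦ : IsJordanTripleHom Φ) (c : ℝ) {A B : Matrix n n 𝕜}
    (hA : A.IsHermitian) (hB : B.IsHermitian) :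
    Φ A * (Φ ((c : 𝕜) • 1) * Φ B * Φ ((c : 𝕜) • 1)) * Φ A =
      Φ ((c : 𝕜) • 1) * (Φ A * Φ B * Φ A) * Φ ((c : 𝕜) • 1) := by
  have hL := isHermitian_ofReal_smul_one (n := n) (𝕜 := 𝕜) c
  rw [← hΦ _ _ hL hB, ← hΦ _ _ hA (hL.mul_mul hB), ← hΦ _ _ hA hB,
    ← hΦ _ _ hL (hA.mul_mul hB)]
  congr 1
  simp only [smul_mul_assoc, mul_smul_comm, mul_one, one_mul, mul_assoc]

theorem conj_unitary [Fintype m] [DecidableEq m] {Φ : Matrix n n 𝕜 → Matrix m m 𝕜}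
    (hΦ : IsJordanTripleHom Φ) {U : Matrix m m 𝕜} (hU : U ∈ unitaryGroup m 𝕜) :
    IsJordanTripleHom fun A => star U * Φ A * U := by
  intro A B hA hB
  have hUU : ∀ X, U * (star U * X) = X := fun X => by
    rw [← mul_assoc, Unitary.mul_star_self_of_mem hU, one_mul]
  simp only [hΦ A B hA hB]
  simp only [mul_assoc, hUU]

theorem re_apply_self [Fintype m] [DecidableEq m] {Φ : Matrix n n 𝕜 → Matrix m m 𝕜}
    (hΦ : IsJordanTripleHom Φ) (hherm : ∀ A, A.IsHermitian → (Φ A).IsHermitian)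
    (hdiag : ∀ A, A.IsHermitian → (Φ A).IsDiag) (i : m) :
    IsJordanTripleHom fun A => RCLike.re (Φ A i i) := by
  intro A B hA hB
  change RCLike.re (Φ (A * B * A) i i) =
    RCLike.re (Φ A i i) * RCLike.re (Φ B i i) * RCLike.re (Φ A i i)
  have hentry : Φ (A * B * A) i i = Φ A i i * Φ B i i * Φ A i i := by
    rw [hΦ A B hA hB, ← (hdiag A hA).diagonal_diag, ← (hdiag B hB).diagonal_diag]
    simp only [diagonal_mul_diagonal, diagonal_apply_eq, diag_apply]
  rw [hentry, ← (hherm A hA).coe_re_apply_self, ← (hherm B hB).coe_re_apply_self]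
  norm_cast

theorem isDiag_of_map_smul_one_eq_diagonal [DecidableEq n]
    {Ψ : Matrix n n 𝕜 → Matrix (Fin 2) (Fin 2) 𝕜} (hΨ : IsJordanTripleHom Ψ)
    (hherm : ∀ A, A.IsHermitian → (Ψ A).IsHermitian) (h1 : Ψ 1 = 1) {l : ℝ} {d : Fin 2 → 𝕜}
    (hd : d 0 ≠ d 1) (hl : Ψ ((l : 𝕜) • 1) = diagonal d) {A : Matrix n n 𝕜}
    (hA : A.IsHermitian) : (Ψ A).IsDiag := by
  have hL := isHermitian_ofReal_smul_one (n := n) (𝕜 := 𝕜) l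
  have hdich : ∀ A : Matrix n n 𝕜, A.IsHermitian → (Ψ A).IsDiag ∨ (Ψ A).diag = 0 := by
    intro A hA
    refine isDiag_or_diag_eq_zero (hherm A hA) hd ?_ ?_
    · have h := hΨ.map_smul_one_comm l hA isHermitian_one
      rwa [h1, hl, mul_one, mul_one] at h
    · have h := hΨ.map_smul_one_comm l hA hL
      rwa [hl] at h
  have hsq : ∀ C : Matrix n n 𝕜, C.IsHermitian → (Ψ (C * C)).IsDiag := by
    intro C hC
    rw [hΨ.map_mul_self h1 hC]
    rcases hdich C hC with h | h
    · exact h.mul h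
    · exact isDiag_mul_self_of_diag_eq_zero h
  have hinv : ∀ K : Matrix n n 𝕜, K.IsHermitian → K * K = 1 → (Ψ K).IsDiag := by
    intro K hK hK2
    refine (hdich K hK).resolve_right fun h =>
      hd (eq_of_diag_eq_zero_of_mul_self_eq_one h ?_ ?_)
    · rw [← hΨ.map_mul_self h1 hK, hK2, h1]
    · rw [← hl, ← hΨ K _ hK hL]
      congr 1
      rw [mul_smul_comm, mul_one, smul_mul_assoc, hK2]
  obtain ⟨C, K, hC, hK, hK2, rfl⟩ := hA.exists_eq_sq_mul_mul_sq
  have hCC : (C * C).IsHermitian := by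
    simpa only [hC.eq] using isHermitian_mul_conjTranspose_self C
  rw [hΨ _ _ hCC hK]
  exact ((hsq C hC).mul (hinv K hK hK2)).mul (hsq C hC)

end IsJordanTripleHom

theorem jtp_nonscalar_image_of_scalar_diagonalizes_general
    (Φ : Matrix (Fin 2) (Fin 2) ℂ → Matrix (Fin 2) (Fin 2) ℂ)
    (hherm : ∀ A, A.IsHermitian → (Φ A).IsHermitian)
    (hjtp : ∀ A B, A.IsHermitian → B.IsHermitian → Φ (A * B * A) = Φ A * Φ B * Φ A)
    (h1 : Φ 1 = 1)
    (hns : ∃ l : ℝ, ¬ ∃ c : ℝ, Φ ((l : ℂ) • 1) = (c : ℂ) • 1) :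
    ∃ U ∈ Matrix.unitaryGroup (Fin 2) ℂ, ∃ φ₁ φ₂ : Matrix (Fin 2) (Fin 2) ℂ → ℝ,
      (∀ A B, A.IsHermitian → B.IsHermitian → φ₁ (A * B * A) = φ₁ A * φ₁ B * φ₁ A) ∧
      (∀ A B, A.IsHermitian → B.IsHermitian → φ₂ (A * B * A) = φ₂ A * φ₂ B * φ₂ A) ∧
      ∀ A, A.IsHermitian →
        Φ A = U * Matrix.diagonal ![(φ₁ A : ℂ), (φ₂ A : ℂ)] * star U := by
  obtain ⟨l, hl⟩ := hns
  obtain ⟨U, hU, d, hd, hUd⟩ :=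
    (hherm _ (isHermitian_ofReal_smul_one l)).exists_unitary_conj_eq_diagonal hl
  set Ψ := fun A => star U * Φ A * U
  have hΨ : IsJordanTripleHom Ψ := IsJordanTripleHom.conj_unitary hjtp hU
  have hΨherm : ∀ A, A.IsHermitian → (Ψ A).IsHermitian := fun A hA => by
    show (star U * Φ A * U).IsHermitian
    simpa only [star_eq_conjTranspose] using isHermitian_conjTranspose_mul_mul U (hherm A hA)
  have hΨ1 : Ψ 1 = 1 := by simp [Ψ, h1, Unitary.star_mul_self_of_mem hU]
  have hdiag : ∀ A, A.IsHermitian → (Ψ A).IsDiag := fun A hA =>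
    hΨ.isDiag_of_map_smul_one_eq_diagonal hΨherm hΨ1 hd hUd hA
  refine ⟨U, hU, fun A => RCLike.re (Ψ A 0 0), fun A => RCLike.re (Ψ A 1 1),
    hΨ.re_apply_self hΨherm hdiag 0, hΨ.re_apply_self hΨherm hdiag 1, fun A hA => ?_⟩
  have hΦΨ : Φ A = U * Ψ A * star U := by
    rw [show U * Ψ A * star U = U * star U * Φ A * (U * star U) by simp only [Ψ, mul_assoc],
      Unitary.mul_star_self_of_mem hU, one_mul, mul_one]
  rw [hΦΨ, (hΨherm A hA).eq_diagonal_re_of_isDiag (hdiag A hA)]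
  congr
  ext i
  fin_cases i <;> rfl

theorem jtp_nonscalar_image_of_scalar_diagonalizes
    (Φ : Matrix (Fin 2) (Fin 2) ℂ → Matrix (Fin 2) (Fin 2) ℂ)
    (hherm : ∀ A, A.IsHermitian → (Φ A).IsHermitian)
    (hjtp : ∀ A B, A.IsHermitian → B.IsHermitian → Φ (A * B * A) = Φ A * Φ B * Φ A)
    (h0 : Φ 0 = 0) (h1 : Φ 1 = 1)
    (hns : ∃ l : ℝ, ¬ ∃ c : ℝ, Φ ((l : ℂ) • 1) = (c : ℂ) • 1) :
    ∃ U ∈ Matrix.unitaryGroup (Fin 2) ℂ, ∃ φ₁ φ₂ : Matrix (Fin 2) (Fin 2) ℂ → ℝ,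
      (∀ A B, A.IsHermitian → B.IsHermitian → φ₁ (A * B * A) = φ₁ A * φ₁ B * φ₁ A) ∧
      (∀ A B, A.IsHermitian → B.IsHermitian → φ₂ (A * B * A) = φ₂ A * φ₂ B * φ₂ A) ∧
      ∀ A, A.IsHermitian →
        Φ A = U * Matrix.diagonal ![(φ₁ A : ℂ), (φ₂ A : ℂ)] * star U :=
  jtp_nonscalar_image_of_scalar_diagonalizes_general Φ hherm hjtp h1 hns
end

section
/- Let Φ : H₂(ℂ) → H₂(ℂ) be a nondegenerate J.T.P. homomorphism (Φ(0)=0, Φ(I)=I, and Φ does not vanish on all rank-one matrices). Then there exists a multiplicative map Ψ : ℝ → ℝ with Ψ(1) = 1 such that Φ(λI) = Ψ(λ)I for every λ ∈ ℝ. -/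
/-
For a rank-one projection `E` on `ℂ²` one has `E X E = tr (E X) • E`. Hence `P Q P = tr (P Q) • P`
for rank-one projections, and nondegeneracy propagates along pairs with `tr (P Q) ≠ 0`: `Φ` vanishes
on no rank-one projection, so it maps rank-one projections to rank-one projections. For
`S = Φ (λ • 1)` and a rank-one projection `Q` the JTP identity gives
`S Φ(Q) S = Φ(λ² Q) = Φ(λ Q)² = (Φ(Q) S Φ(Q))²`, which forces `S` to commute with `Φ Q`.
The images of `diag(1, 0)` and of the projection onto `ℂ (1, 1)` do not commute, since `Φ`
separates rank-one projections with `tr (P Q) = 1/2`; so `S` is a real scalar `Ψ λ`. On scalars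
the JTP identity reads `Ψ (x² y) = Ψ x ^ 2 * Ψ y`, which together with `Ψ 1 = 1` gives
multiplicativity.
-/

open Matrix
open scoped ComplexOrder

theorem Matrix.mul_mul_fin_two {R : Type*} [CommRing R] (A B : Matrix (Fin 2) (Fin 2) R) :
    A * B * A = (A * B).trace • A + A.det • (B - B.trace • 1) := by
  ext i j
  fin_cases i <;> fin_cases j <;>
    simp [mul_apply, trace_fin_two, det_fin_two, Fin.sum_univ_two] <;> ring

lemma Matrix.IsHermitian.star_trace_mul {n : Type*} [Fintype n] {P Q : Matrix n n ℂ}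
    (hP : P.IsHermitian) (hQ : Q.IsHermitian) : star (P * Q).trace = (P * Q).trace := by
  rw [← trace_conjTranspose, conjTranspose_mul, hP.eq, hQ.eq, trace_mul_comm]

lemma Matrix.IsHermitian.eq_zero_of_mul_self {n : Type*} [Fintype n] {A : Matrix n n ℂ}
    (hA : A.IsHermitian) (h : A * A = 0) : A = 0 := by
  rw [← conjTranspose_mul_self_eq_zero, hA.eq]
  exact h

lemma Matrix.IsHermitian.ofReal_smul {n : Type*} {A : Matrix n n ℂ} (hA : A.IsHermitian) (r : ℝ) :
    ((r : ℂ) • A).IsHermitian :=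
  hA.smul (Complex.conj_ofReal r)

lemma Matrix.IsHermitian.exists_ofReal_of_eq_smul_one {n : Type*} [Fintype n] [DecidableEq n]
    [Nonempty n] {S : Matrix n n ℂ} (hS : S.IsHermitian) {c : ℂ} (h : S = c • 1) :
    ∃ r : ℝ, S = (r : ℂ) • 1 := by
  refine ⟨c.re, ?_⟩
  have hc : star c = c := by
    apply smul_left_injective ℂ (one_ne_zero (α := Matrix n n ℂ))
    simp only
    rw [← conjTranspose_one, ← conjTranspose_smul, conjTranspose_one, ← h, hS.eq]
  rw [h, Complex.conj_eq_iff_re.mp hc]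

local notation "𝕄" => Matrix (Fin 2) (Fin 2) ℂ

lemma Matrix.mul_self_eq_trace_smul_of_rank_eq_one {A : 𝕄} (h : A.rank = 1) :
    A * A = A.trace • A := by
  have hdet : A.det = 0 := by
    by_contra hd
    have := A.rank_of_isUnit ((isUnit_iff_isUnit_det A).mpr (isUnit_iff_ne_zero.mpr hd))
    simp [h] at this
  simpa [hdet] using mul_mul_fin_two A 1

lemma Matrix.IsHermitian.trace_ne_zero_of_rank_eq_one {A : 𝕄} (hA : A.IsHermitian)
    (h : A.rank = 1) : A.trace ≠ 0 := by
  intro ht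
  have hA0 : A = 0 := hA.eq_zero_of_mul_self (by
    rw [mul_self_eq_trace_smul_of_rank_eq_one h, ht, zero_smul])
  simp [hA0] at h

structure IsRankOneProj (E : 𝕄) : Prop where
  isHermitian : E.IsHermitian
  mul_self : E * E = E
  trace_eq_one : E.trace = 1

namespace IsRankOneProj

variable {E F S : 𝕄}

lemma det_eq_zero (hE : IsRankOneProj E) : E.det = 0 := by
  have h := congrFun (congrFun (mul_mul_fin_two E 1) 0) 0
  simp [hE.mul_self, hE.trace_eq_one] at h
  exact h.resolve_right (by norm_num)

lemma mul_mul_self_eq (hE : IsRankOneProj E) (X : 𝕄) : E * X * E = (E * X).trace • E := by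
  rw [mul_mul_fin_two, hE.det_eq_zero, zero_smul, add_zero]

lemma one_sub (hE : IsRankOneProj E) : IsRankOneProj (1 - E) where
  isHermitian := isHermitian_one.sub hE.isHermitian
  mul_self := by rw [sub_mul, mul_sub, mul_sub, hE.mul_self]; simp
  trace_eq_one := by rw [trace_sub, trace_one, hE.trace_eq_one]; norm_num

lemma mul_one_sub (hE : IsRankOneProj E) : E * (1 - E) = 0 := by
  rw [mul_sub, mul_one, hE.mul_self, sub_self]

lemma of_mul_self {E : 𝕄} (hH : E.IsHermitian) (hEE : E * E = E) (h0 : E ≠ 0) (h1 : E ≠ 1) :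
    IsRankOneProj E := by
  have hdet : E.det = 0 := by
    by_contra hd
    have hu : IsUnit E := (isUnit_iff_isUnit_det E).mpr (isUnit_iff_ne_zero.mpr hd)
    exact h1 (hu.mul_left_cancel (by rw [hEE, mul_one]))
  have h := mul_mul_fin_two E 1
  rw [mul_one, hEE, hdet, zero_smul, add_zero] at h
  refine ⟨hH, hEE, ?_⟩
  have h' : (E.trace - 1) • E = 0 := by rw [sub_smul, one_smul, ← h, sub_self]
  exact sub_eq_zero.mp ((smul_eq_zero.mp h').resolve_right h0)

lemma inv_trace_smul {A : 𝕄} (hA : A.IsHermitian) (h : A.rank = 1) :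
    IsRankOneProj (A.trace⁻¹ • A) where
  isHermitian := hA.smul (by
    rw [IsSelfAdjoint, star_inv₀, ← trace_conjTranspose, hA.eq])
  mul_self := by
    have ht := hA.trace_ne_zero_of_rank_eq_one h
    rw [smul_mul_smul_comm, mul_self_eq_trace_smul_of_rank_eq_one h, smul_smul, mul_assoc,
      inv_mul_cancel₀ ht, mul_one]
  trace_eq_one := by
    rw [trace_smul, smul_eq_mul, inv_mul_cancel₀ (hA.trace_ne_zero_of_rank_eq_one h)]

lemma exists_trace_single_mul_ne_zero (hE : IsRankOneProj E) :
    ∃ i, (single i i 1 * E).trace ≠ 0 := by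
  by_contra! h
  have h0 := h 0
  have h1 := h 1
  rw [trace_single_mul, one_smul] at h0 h1
  have := hE.trace_eq_one
  rw [trace_fin_two, h0, h1, add_zero] at this
  exact zero_ne_one this

lemma eq_one_sub_of_mul_mul_eq_zero (hE : IsRankOneProj E) (hF : IsRankOneProj F)
    (h : E * F * E = 0) : F = 1 - E := by
  have hFE : F * E = 0 := by
    rw [← conjTranspose_mul_self_eq_zero, conjTranspose_mul, hE.isHermitian.eq, hF.isHermitian.eq,
      mul_assoc, ← mul_assoc F, hF.mul_self, ← mul_assoc, h]
  have hEF : E * F = 0 := by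
    rw [← hE.isHermitian.eq, ← hF.isHermitian.eq, ← conjTranspose_mul, hFE, conjTranspose_zero]
  have htr : ((1 - E) * F).trace = 1 := by
    rw [sub_mul, one_mul, hEF, sub_zero, hF.trace_eq_one]
  calc F = (1 - E) * F * (1 - E) := by
        rw [sub_mul, one_mul, hEF, sub_zero, mul_sub, mul_one, hFE, sub_zero]
    _ = 1 - E := by rw [hE.one_sub.mul_mul_self_eq, htr, one_smul]

lemma eq_or_eq_one_sub_of_commute (hE : IsRankOneProj E) (hF : IsRankOneProj F)
    (h : Commute E F) : F = E ∨ F = 1 - E := by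
  obtain ⟨t, ht⟩ : ∃ t, (E * F).trace = t := ⟨_, rfl⟩
  have hEFE : E * F * E = t • E := ht ▸ hE.mul_mul_self_eq F
  have hEF : E * F = t • E := by
    rw [← hEFE, mul_assoc, ← h.eq, ← mul_assoc, hE.mul_self]
  have hFE : F * E = t • F := by
    rw [← ht, trace_mul_comm, ← hF.mul_mul_self_eq, mul_assoc, h.eq, ← mul_assoc, hF.mul_self]
  by_cases ht0 : t = 0
  · right
    exact hE.eq_one_sub_of_mul_mul_eq_zero hF (by rw [hEFE, ht0, zero_smul])
  · left
    exact smul_right_injective _ ht0 (hFE.symm.trans (h.eq.symm.trans hEF))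

lemma commute_of_mul_mul_eq (hE : IsRankOneProj E) (hS : S.IsHermitian)
    (h : S * E * S = E * S * E * (E * S * E)) : Commute S E := by
  obtain ⟨a, ha⟩ : ∃ a, (E * S).trace = a := ⟨_, rfl⟩
  have hESE : E * S * E = a • E := ha ▸ hE.mul_mul_self_eq S
  have hSES : S * E * S = (a * a) • E := by
    rw [h, hESE, smul_mul_smul_comm, hE.mul_self]
  have hSE_tr : (S * E).trace = a := by rw [trace_mul_comm, ha]
  have hSE : S * E = a • E := by
    rw [← sub_eq_zero, ← trace_mul_conjTranspose_self_eq_zero_iff]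
    have hSEE : S * E * E = S * E := by rw [mul_assoc, hE.mul_self]
    rw [conjTranspose_sub, conjTranspose_mul, conjTranspose_smul, hS.eq, hE.isHermitian.eq]
    simp only [sub_mul, mul_sub, Matrix.smul_mul, Matrix.mul_smul, smul_smul, ← mul_assoc, hSEE,
      hE.mul_self, hSES, trace_sub, trace_smul, hSE_tr, ha, hE.trace_eq_one, smul_eq_mul]
    ring
  have hES : E * S = star a • E := by
    rw [← hE.isHermitian.eq, ← hS.eq, ← conjTranspose_mul, hSE, conjTranspose_smul]
  have ha_real : star a = a := by
    have := congrArg trace hES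
    rwa [trace_smul, hE.trace_eq_one, smul_eq_mul, mul_one, ha, eq_comm] at this
  rw [Commute, SemiconjBy, hSE, hES, ha_real]

lemma exists_eq_smul_one_of_commute (hE : IsRankOneProj E) (hEF : ¬ Commute E F)
    (hSE : Commute S E) (hSF : Commute S F) : ∃ c : ℂ, S = c • 1 := by
  obtain ⟨a, ha⟩ : ∃ a, (E * S).trace = a := ⟨_, rfl⟩
  obtain ⟨b, hb⟩ : ∃ b, ((1 - E) * S).trace = b := ⟨_, rfl⟩
  have hS : S = a • E + b • (1 - E) := by
    have hSE' : S * E = a • E := by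
      rw [← ha, ← hE.mul_mul_self_eq, ← hSE.eq, mul_assoc, hE.mul_self]
    have hSE'' : S * (1 - E) = b • (1 - E) := by
      rw [← hb, ← hE.one_sub.mul_mul_self_eq, ← ((Commute.one_right S).sub_right hSE).eq,
        mul_assoc, hE.one_sub.mul_self]
    rw [← hSE', ← hSE'', ← mul_add, add_sub_cancel, mul_one]
  have hab : a = b := by
    by_contra hab
    apply hEF
    have h := hSF.eq
    rw [hS] at h
    simp only [add_mul, mul_add, sub_mul, mul_sub, Matrix.smul_mul, Matrix.mul_smul, one_mul,
      mul_one] at h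
    have h' : (a - b) • (E * F - F * E) = 0 := by
      linear_combination (norm := module) h
    exact sub_eq_zero.mp ((smul_eq_zero.mp h').resolve_left (sub_ne_zero.mpr hab))
  refine ⟨a, ?_⟩
  rw [hS, ← hab, ← smul_add, add_sub_cancel]

end IsRankOneProj

noncomputable def onesProj : 𝕄 := of fun _ _ => 2⁻¹

lemma isRankOneProj_single (i : Fin 2) : IsRankOneProj (single i i 1) where
  isHermitian := by rw [IsHermitian, conjTranspose_single, star_one]
  mul_self := by rw [single_mul_single_same, mul_one]
  trace_eq_one := trace_single_eq_same _ _

lemma isRankOneProj_onesProj : IsRankOneProj onesProj where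
  isHermitian := by ext i j; simp [onesProj]
  mul_self := by ext i j; simp [onesProj, mul_apply]
  trace_eq_one := by simp [onesProj, trace_fin_two]; norm_num

lemma trace_single_mul_onesProj (i : Fin 2) : (single i i 1 * onesProj).trace = 2⁻¹ := by
  simp [trace_single_mul, onesProj]

lemma map_mul_of_map_mul_self_mul {ψ : ℝ → ℝ} (h1 : ψ 1 = 1)
    (h : ∀ x y, ψ (x * x * y) = ψ x * ψ x * ψ y) (x y : ℝ) : ψ (x * y) = ψ x * ψ y := by
  have hsq (x : ℝ) : ψ (x * x) = ψ x * ψ x := by simpa [h1] using h x 1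
  have hnonneg (x y : ℝ) (hx : 0 ≤ x) : ψ (x * y) = ψ x * ψ y := by
    rw [← Real.mul_self_sqrt hx, h, hsq]
  have hm1 : ψ (-1) * ψ (-1) = 1 := by simpa [h1] using (hsq (-1)).symm
  have hneg (y : ℝ) : ψ (-y) = ψ (-1) * ψ y := by
    rcases le_total 0 y with hy | hy
    · rw [← mul_neg_one, hnonneg _ _ hy, mul_comm]
    · have h' := hnonneg (-y) (-1) (neg_nonneg.mpr hy)
      rw [neg_mul_neg, mul_one] at h'
      rw [h', ← mul_assoc, mul_comm, ← mul_assoc, hm1, one_mul]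
  rcases le_total 0 x with hx | hx
  · exact hnonneg x y hx
  · rw [← neg_mul_neg, hnonneg _ _ (neg_nonneg.mpr hx), hneg x, hneg y]
    linear_combination ψ x * ψ y * hm1

structure IsJTPHom_s10 (Φ : 𝕄 → 𝕄) : Prop where
  isHermitian_map : ∀ A, A.IsHermitian → (Φ A).IsHermitian
  map_mul_mul : ∀ A B, A.IsHermitian → B.IsHermitian → Φ (A * B * A) = Φ A * Φ B * Φ A

namespace IsJTPHom_s10

variable {Φ : 𝕄 → 𝕄} {P Q R : 𝕄}

lemma map_mul_self (hΦ : IsJTPHom_s10 Φ) (h1 : Φ 1 = 1) (hP : P.IsHermitian) (hPP : P * P = P) :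
    Φ P * Φ P = Φ P := by
  have h := hΦ.map_mul_mul P 1 hP isHermitian_one
  rwa [mul_one, hPP, h1, mul_one, eq_comm] at h

lemma map_eq_zero_of_map_smul_eq_zero (hΦ : IsJTPHom_s10 Φ) (hP : P.IsHermitian) (hPP : P * P = P)
    {r : ℝ} (hr : r ≠ 0) (h : Φ ((r : ℂ) • P) = 0) : Φ P = 0 := by
  have hsq : Φ (((r * r : ℝ) : ℂ) • P) = 0 := by
    have hj := hΦ.map_mul_mul _ 1 (hP.ofReal_smul r) isHermitian_one
    rwa [mul_one, smul_mul_smul_comm, hPP, h, zero_mul, zero_mul, ← Complex.ofReal_mul] at hj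
  have hP_eq : ((r⁻¹ : ℝ) : ℂ) • P * (((r * r : ℝ) : ℂ) • P) * (((r⁻¹ : ℝ) : ℂ) • P) = P := by
    rw [smul_mul_smul_comm, smul_mul_smul_comm, hPP, hPP, ← Complex.ofReal_mul,
      ← Complex.ofReal_mul, show r⁻¹ * (r * r) * r⁻¹ = 1 by field_simp, Complex.ofReal_one,
      one_smul]
  rw [← hP_eq, hΦ.map_mul_mul _ _ (hP.ofReal_smul _) (hP.ofReal_smul _), hsq, mul_zero, zero_mul]

lemma map_ne_zero_of_trace_mul_ne_zero (hΦ : IsJTPHom_s10 Φ) (hP : IsRankOneProj P)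
    (hQ : IsRankOneProj Q) (htr : (P * Q).trace ≠ 0) (hΦP : Φ P ≠ 0) : Φ Q ≠ 0 := by
  intro hΦQ
  obtain ⟨r, hr⟩ : ∃ r : ℝ, (r : ℂ) = (P * Q).trace :=
    ⟨_, Complex.conj_eq_iff_re.mp (hP.isHermitian.star_trace_mul hQ.isHermitian)⟩
  refine hΦP (hΦ.map_eq_zero_of_map_smul_eq_zero hP.isHermitian hP.mul_self
    (r := r) (by rintro rfl; simp_all) ?_)
  rw [hr, ← hP.mul_mul_self_eq, hΦ.map_mul_mul _ _ hP.isHermitian hQ.isHermitian, hΦQ, mul_zero,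
    zero_mul]

lemma exists_map_ne_zero (hΦ : IsJTPHom_s10 Φ)
    (hnd : ∃ A : 𝕄, A.IsHermitian ∧ A.rank = 1 ∧ Φ A ≠ 0) : ∃ P, IsRankOneProj P ∧ Φ P ≠ 0 := by
  obtain ⟨A, hA, hrank, hΦA⟩ := hnd
  have hP := IsRankOneProj.inv_trace_smul hA hrank
  generalize hP_def : A.trace⁻¹ • A = P at hP
  refine ⟨P, hP, fun hΦP => hΦA ?_⟩
  have hA_eq : A = A.trace • P := by
    rw [← hP_def, smul_smul, mul_inv_cancel₀ (hA.trace_ne_zero_of_rank_eq_one hrank), one_smul]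
  have hPAP : P * A * P = A := by
    rw [hA_eq, Matrix.mul_smul, hP.mul_self, Matrix.smul_mul, hP.mul_self]
  rw [← hPAP, hΦ.map_mul_mul _ _ hP.isHermitian hA, hΦP, zero_mul, zero_mul]

lemma map_ne_zero (hΦ : IsJTPHom_s10 Φ) (hnd : ∃ A : 𝕄, A.IsHermitian ∧ A.rank = 1 ∧ Φ A ≠ 0)
    (hQ : IsRankOneProj Q) : Φ Q ≠ 0 := by
  have half_ne_zero : (2⁻¹ : ℂ) ≠ 0 := by norm_num
  obtain ⟨P, hP, hΦP⟩ := hΦ.exists_map_ne_zero hnd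
  obtain ⟨i, hi⟩ := hP.exists_trace_single_mul_ne_zero
  have hΦi := hΦ.map_ne_zero_of_trace_mul_ne_zero hP (isRankOneProj_single i)
    (by rwa [trace_mul_comm]) hΦP
  have hΦones := hΦ.map_ne_zero_of_trace_mul_ne_zero (isRankOneProj_single i)
    isRankOneProj_onesProj (by rw [trace_single_mul_onesProj]; exact half_ne_zero) hΦi
  obtain ⟨j, hj⟩ := hQ.exists_trace_single_mul_ne_zero
  have hΦj := hΦ.map_ne_zero_of_trace_mul_ne_zero isRankOneProj_onesProj
    (isRankOneProj_single j) (by rw [trace_mul_comm, trace_single_mul_onesProj]; exact half_ne_zero)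
    hΦones
  exact hΦ.map_ne_zero_of_trace_mul_ne_zero (isRankOneProj_single j) hQ hj hΦj

lemma isRankOneProj_map (hΦ : IsJTPHom_s10 Φ) (h0 : Φ 0 = 0) (h1 : Φ 1 = 1)
    (hnd : ∃ A : 𝕄, A.IsHermitian ∧ A.rank = 1 ∧ Φ A ≠ 0) (hQ : IsRankOneProj Q) :
    IsRankOneProj (Φ Q) := by
  refine .of_mul_self (hΦ.isHermitian_map Q hQ.isHermitian)
    (hΦ.map_mul_self h1 hQ.isHermitian hQ.mul_self) (hΦ.map_ne_zero hnd hQ)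
    fun hΦQ => hΦ.map_ne_zero hnd hQ.one_sub ?_
  have h := hΦ.map_mul_mul _ _ hQ.isHermitian hQ.one_sub.isHermitian
  rwa [hQ.mul_one_sub, zero_mul, h0, hΦQ, one_mul, mul_one, eq_comm] at h

lemma map_ne_map_of_trace_mul_eq_half (hΦ : IsJTPHom_s10 Φ) (h0 : Φ 0 = 0) (h1 : Φ 1 = 1)
    (hP : IsRankOneProj P) (hR : IsRankOneProj R) (htr : (P * R).trace = 2⁻¹)
    (hΦP : Φ P ≠ 0) : Φ R ≠ Φ P := by
  intro h
  have hPRP : P * R * P = (2⁻¹ : ℂ) • P := htr ▸ hP.mul_mul_self_eq R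
  have hPR'P : P * (1 - R) * P = (2⁻¹ : ℂ) • P := by
    rw [hP.mul_mul_self_eq, mul_sub, trace_sub, mul_one, hP.trace_eq_one, htr]
    norm_num
  have hΦPP := hΦ.map_mul_self h1 hP.isHermitian hP.mul_self
  apply hΦP
  calc Φ P = Φ P * Φ R * Φ P := by rw [h, hΦPP, hΦPP]
    _ = Φ (P * (1 - R) * P) := by
      rw [← hΦ.map_mul_mul _ _ hP.isHermitian hR.isHermitian, hPRP, hPR'P]
    _ = Φ (R * (1 - R) * R) := by
      rw [hΦ.map_mul_mul _ _ hP.isHermitian hR.one_sub.isHermitian, ← h,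
        hΦ.map_mul_mul _ _ hR.isHermitian hR.one_sub.isHermitian]
    _ = 0 := by rw [hR.mul_one_sub, zero_mul, h0]

lemma commute_map_smul_one (hΦ : IsJTPHom_s10 Φ) (h1 : Φ 1 = 1) (hQ : Q.IsHermitian)
    (hQQ : Q * Q = Q) (hΦQ : IsRankOneProj (Φ Q)) (l : ℝ) :
    Commute (Φ ((l : ℂ) • 1)) (Φ Q) := by
  have hl := (isHermitian_one (n := Fin 2) (α := ℂ)).ofReal_smul l
  refine hΦQ.commute_of_mul_mul_eq (hΦ.isHermitian_map _ hl) ?_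
  have hlQ : Q * ((l : ℂ) • 1) * Q = (l : ℂ) • Q := by
    rw [Matrix.mul_smul, Matrix.smul_mul, mul_one, hQQ]
  calc Φ ((l : ℂ) • 1) * Φ Q * Φ ((l : ℂ) • 1) = Φ ((l : ℂ) • 1 * Q * ((l : ℂ) • 1)) :=
        (hΦ.map_mul_mul _ _ hl hQ).symm
    _ = Φ ((l : ℂ) • Q * 1 * ((l : ℂ) • Q)) := by
      simp only [Matrix.smul_mul, Matrix.mul_smul, one_mul, mul_one, hQQ]
    _ = Φ Q * Φ ((l : ℂ) • 1) * Φ Q * (Φ Q * Φ ((l : ℂ) • 1) * Φ Q) := by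
      rw [hΦ.map_mul_mul _ _ (hQ.ofReal_smul l) isHermitian_one, h1, mul_one, ← hlQ,
        hΦ.map_mul_mul _ _ hQ hl]

lemma not_commute_map_single_onesProj (hΦ : IsJTPHom_s10 Φ) (h0 : Φ 0 = 0) (h1 : Φ 1 = 1)
    (hnd : ∃ A : 𝕄, A.IsHermitian ∧ A.rank = 1 ∧ Φ A ≠ 0) :
    ¬ Commute (Φ (single 0 0 1)) (Φ onesProj) := by
  have hE₀ := hΦ.isRankOneProj_map h0 h1 hnd (isRankOneProj_single 0)
  have hE₁ : Φ (single 1 1 1) = 1 - Φ (single 0 0 1) :=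
    hE₀.eq_one_sub_of_mul_mul_eq_zero (hΦ.isRankOneProj_map h0 h1 hnd (isRankOneProj_single 1))
      (by rw [← hΦ.map_mul_mul _ _ (isRankOneProj_single 0).isHermitian
        (isRankOneProj_single 1).isHermitian]; simp [h0])
  have hne_map (i : Fin 2) : Φ onesProj ≠ Φ (single i i 1) :=
    hΦ.map_ne_map_of_trace_mul_eq_half h0 h1 (isRankOneProj_single i) isRankOneProj_onesProj
      (trace_single_mul_onesProj i) (hΦ.map_ne_zero hnd (isRankOneProj_single i))
  intro hc
  rcases hE₀.eq_or_eq_one_sub_of_commute (hΦ.isRankOneProj_map h0 h1 hnd isRankOneProj_onesProj)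
    hc with h | h
  · exact hne_map 0 h
  · exact hne_map 1 (h.trans hE₁.symm)

lemma exists_map_smul_one_eq (hΦ : IsJTPHom_s10 Φ) (h0 : Φ 0 = 0) (h1 : Φ 1 = 1)
    (hnd : ∃ A : 𝕄, A.IsHermitian ∧ A.rank = 1 ∧ Φ A ≠ 0) (l : ℝ) :
    ∃ c : ℝ, Φ ((l : ℂ) • 1) = (c : ℂ) • 1 := by
  have hE := isRankOneProj_single 0
  have hF := isRankOneProj_onesProj
  obtain ⟨c, hc⟩ := (hΦ.isRankOneProj_map h0 h1 hnd hE).exists_eq_smul_one_of_commute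
    (hΦ.not_commute_map_single_onesProj h0 h1 hnd)
    (hΦ.commute_map_smul_one h1 hE.isHermitian hE.mul_self (hΦ.isRankOneProj_map h0 h1 hnd hE) l)
    (hΦ.commute_map_smul_one h1 hF.isHermitian hF.mul_self (hΦ.isRankOneProj_map h0 h1 hnd hF) l)
  exact (hΦ.isHermitian_map _ (isHermitian_one.ofReal_smul l)).exists_ofReal_of_eq_smul_one hc

lemma exists_mul_hom_of_map_smul_one (hΦ : IsJTPHom_s10 Φ) (h1 : Φ 1 = 1)
    (h : ∀ l : ℝ, ∃ c : ℝ, Φ ((l : ℂ) • 1) = (c : ℂ) • 1) :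
    ∃ Ψ : ℝ → ℝ, (∀ x y : ℝ, Ψ (x * y) = Ψ x * Ψ y) ∧ Ψ 1 = 1 ∧
      ∀ l : ℝ, Φ ((l : ℂ) • 1) = (Ψ l : ℂ) • 1 := by
  choose Ψ hΨ using h
  have hinj : Function.Injective fun r : ℝ => (r : ℂ) • (1 : 𝕄) :=
    (smul_left_injective ℂ one_ne_zero).comp Complex.ofReal_injective
  have hscalar_mul (a b : ℝ) :
      (a : ℂ) • (1 : 𝕄) * ((b : ℂ) • 1) * ((a : ℂ) • 1) = ((a * a * b : ℝ) : ℂ) • 1 := by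
    simp only [smul_mul_smul_comm, mul_one, Complex.ofReal_mul]
    ring_nf
  have hΨ1 : Ψ 1 = 1 := hinj (by simp only; rw [← hΨ, Complex.ofReal_one, one_smul, h1])
  refine ⟨Ψ, map_mul_of_map_mul_self_mul hΨ1 fun x y => hinj ?_, hΨ1, hΨ⟩
  simp only
  have hxy := hΦ.map_mul_mul _ _ (isHermitian_one.ofReal_smul x) (isHermitian_one.ofReal_smul y)
  rw [hscalar_mul, hΨ, hΨ, hΨ, hscalar_mul] at hxy
  exact hxy

end IsJTPHom_s10

theorem jtp_nondegenerate_scalars_to_scalars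
    (Φ : Matrix (Fin 2) (Fin 2) ℂ → Matrix (Fin 2) (Fin 2) ℂ)
    (hherm : ∀ A, A.IsHermitian → (Φ A).IsHermitian)
    (hjtp : ∀ A B, A.IsHermitian → B.IsHermitian → Φ (A * B * A) = Φ A * Φ B * Φ A)
    (h0 : Φ 0 = 0) (h1 : Φ 1 = 1)
    (hnd : ∃ A : Matrix (Fin 2) (Fin 2) ℂ, A.IsHermitian ∧ A.rank = 1 ∧ Φ A ≠ 0) :
    ∃ Ψ : ℝ → ℝ, (∀ x y : ℝ, Ψ (x * y) = Ψ x * Ψ y) ∧ Ψ 1 = 1 ∧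
      ∀ l : ℝ, Φ ((l : ℂ) • 1) = (Ψ l : ℂ) • 1 := by
  have hΦ : IsJTPHom_s10 Φ := ⟨hherm, hjtp⟩
  exact hΦ.exists_mul_hom_of_map_smul_one h1 (hΦ.exists_map_smul_one_eq h0 h1 hnd)
end

section
/- Let Φ : H₂(ℂ) → H₂(ℂ) be a nondegenerate J.T.P. homomorphism with Φ(E₁₁) = E₁₁, where E₁₁ = diag(1,0). Then for all a, c ∈ ℝ and b ∈ ℂ, the (1,1) entry of Φ([[a, b],[conj(b), c]]) equals Ψ(a) and the (2,2) entry equals Ψ(c), where Ψ : ℝ → ℝ is the multiplicative map with Φ(λI) = Ψ(λ)I. -/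
/-!
Write `E = diag(1, 0)` and `F = diag(0, 1)`. For a Hermitian `A` with diagonal `(a, c)` we have
`E A E = E (a I) E`, so `E Φ(A) E = Φ(E A E) = Φ(E (a I) E) = Ψ(a) E`, which is the `(1,1)` entry;
the same with `F` gives the `(2,2)` entry once `Φ(F) = F` is known. For that, conjugate by the swap
`S`: `Φ(F) = Φ(S) E Φ(S)` with `Φ(S)² = Φ(S 1 S) = 1`, so `Φ(F)` is a nonzero Hermitian idempotent,
and `E Φ(F) E = Φ(E F E) = 0` leaves `F` as the only possibility.
-/

open Matrix

section JordanTriple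

variable {n : Type*} [Fintype n] [DecidableEq n] {Φ : Matrix n n ℂ → Matrix n n ℂ}

theorem jtp_mul_self_eq_one
    (hjtp : ∀ A B, A.IsHermitian → B.IsHermitian → Φ (A * B * A) = Φ A * Φ B * Φ A)
    (h1 : Φ 1 = 1) {S : Matrix n n ℂ} (hS : S.IsHermitian) (hSS : S * S = 1) :
    Φ S * Φ S = 1 := by
  simpa [hSS, h1] using (hjtp S 1 hS isHermitian_one).symm

theorem jtp_mul_self_eq_self
    (hjtp : ∀ A B, A.IsHermitian → B.IsHermitian → Φ (A * B * A) = Φ A * Φ B * Φ A)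
    (h1 : Φ 1 = 1) {P : Matrix n n ℂ} (hP : P.IsHermitian) (hPP : P * P = P) :
    Φ P * Φ P = Φ P := by
  simpa [hPP, h1] using (hjtp P 1 hP isHermitian_one).symm

theorem jtp_apply_diag_eq_of_map_single
    (hjtp : ∀ A B, A.IsHermitian → B.IsHermitian → Φ (A * B * A) = Φ A * Φ B * Φ A)
    {Ψ : ℝ → ℝ} (hΨ : ∀ l : ℝ, Φ ((l : ℂ) • 1) = (Ψ l : ℂ) • 1)
    {i : n} (hfix : Φ (single i i 1) = single i i 1)
    {A : Matrix n n ℂ} (hA : A.IsHermitian) {c : ℝ} (hc : A i i = c) :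
    Φ A i i = Ψ c := by
  set E : Matrix n n ℂ := single i i 1
  have hE : E.IsHermitian := by simp [E, IsHermitian]
  have hc1 : ((c : ℂ) • (1 : Matrix n n ℂ)).IsHermitian :=
    isHermitian_one.smul (by simp [IsSelfAdjoint])
  have hsandwich : E * A * E = E * ((c : ℂ) • 1) * E := by simp [E, hc]
  calc Φ A i i = (E * Φ A * E) i i := by simp [E]
    _ = (E * ((Ψ c : ℂ) • 1) * E) i i := by
      rw [← hfix, ← hjtp _ _ hE hA, hsandwich, hjtp _ _ hE hc1, hΨ]
    _ = Ψ c := by simp [E]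

end JordanTriple

theorem Matrix.IsHermitian.eq_single_one_one_of_mul_self {𝕜 : Type*} [RCLike 𝕜]
    {P : Matrix (Fin 2) (Fin 2) 𝕜} (hP : P.IsHermitian) (hPP : P * P = P) (h00 : P 0 0 = 0)
    (hne : P ≠ 0) : P = single 1 1 1 := by
  have h10 : P 1 0 = star (P 0 1) := (hP.apply 1 0).symm
  have h01 : P 0 1 = 0 := by
    have e00 := congrArg (· 0 0) hPP
    simp only [mul_apply, Fin.sum_univ_two, h00, h10, mul_zero, zero_add] at e00
    simpa using e00
  have h11 : P 1 1 * (P 1 1 - 1) = 0 := by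
    have e11 := congrArg (· 1 1) hPP
    simp only [mul_apply, Fin.sum_univ_two, h10, h01, star_zero, mul_zero, zero_add] at e11
    linear_combination e11
  have hP_eq : P = single 1 1 (P 1 1) := by
    ext i j; fin_cases i <;> fin_cases j <;> simp [h00, h01, h10]
  rcases mul_eq_zero.mp h11 with h | h
  · exact absurd (hP_eq.trans (by simp [h])) hne
  · rw [hP_eq, sub_eq_zero.mp h]

theorem jtp_map_single_one_one {Φ : Matrix (Fin 2) (Fin 2) ℂ → Matrix (Fin 2) (Fin 2) ℂ}
    (hherm : ∀ A, A.IsHermitian → (Φ A).IsHermitian)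
    (hjtp : ∀ A B, A.IsHermitian → B.IsHermitian → Φ (A * B * A) = Φ A * Φ B * Φ A)
    (h0 : Φ 0 = 0) (h1 : Φ 1 = 1) (hE : Φ (single 0 0 1) = single 0 0 1) :
    Φ (single 1 1 1) = single 1 1 1 := by
  set E : Matrix (Fin 2) (Fin 2) ℂ := single 0 0 1
  set F : Matrix (Fin 2) (Fin 2) ℂ := single 1 1 1
  set S : Matrix (Fin 2) (Fin 2) ℂ := !![0, 1; 1, 0]
  have hEh : E.IsHermitian := by simp [E, IsHermitian]
  have hFh : F.IsHermitian := by simp [F, IsHermitian]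
  have hSh : S.IsHermitian := by
    ext i j; fin_cases i <;> fin_cases j <;> simp [S]
  have hSS : S * S = 1 := by
    ext i j; fin_cases i <;> fin_cases j <;> simp [S, mul_apply, one_apply]
  have hSES : S * E * S = F := by
    ext i j; fin_cases i <;> fin_cases j <;> simp [S, E, F, vecMul, dotProduct, Fin.sum_univ_two]
  have hΦS : Φ S * Φ S = 1 := jtp_mul_self_eq_one hjtp h1 hSh hSS
  have hΦF : Φ F = Φ S * E * Φ S := by rw [← hSES, hjtp _ _ hSh hEh, hE]
  have hF00 : Φ F 0 0 = 0 := by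
    have h := hjtp _ _ hEh hFh
    rw [show E * F * E = 0 by simp [E, F], h0, hE] at h
    simpa [E] using congrArg (· 0 0) h.symm
  have hFne : Φ F ≠ 0 := by
    intro hF
    have h : Φ S * Φ F * Φ S = E := by
      rw [hΦF, ← mul_assoc, ← mul_assoc, hΦS, one_mul, mul_assoc, hΦS, mul_one]
    simpa [hF, E] using congrArg (· 0 0) h
  exact (hherm F hFh).eq_single_one_one_of_mul_self
    (jtp_mul_self_eq_self hjtp h1 hFh (by simp [F])) hF00 hFne

theorem jtp_diagonal_entries_general
    (Φ : Matrix (Fin 2) (Fin 2) ℂ → Matrix (Fin 2) (Fin 2) ℂ)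
    (hherm : ∀ A, A.IsHermitian → (Φ A).IsHermitian)
    (hjtp : ∀ A B, A.IsHermitian → B.IsHermitian → Φ (A * B * A) = Φ A * Φ B * Φ A)
    (h0 : Φ 0 = 0) (h1 : Φ 1 = 1)
    (hE : Φ (Matrix.diagonal ![(1 : ℂ), 0]) = Matrix.diagonal ![(1 : ℂ), 0])
    (Ψ : ℝ → ℝ) (hΨ : ∀ l : ℝ, Φ ((l : ℂ) • 1) = (Ψ l : ℂ) • 1) :
    ∀ (a c : ℝ) (b : ℂ),
      (Φ !![(a : ℂ), b; (starRingEnd ℂ) b, (c : ℂ)]) 0 0 = (Ψ a : ℂ) ∧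
      (Φ !![(a : ℂ), b; (starRingEnd ℂ) b, (c : ℂ)]) 1 1 = (Ψ c : ℂ) := by
  intro a c b
  have hdiag : diagonal ![(1 : ℂ), 0] = single 0 0 1 := by
    ext i j; fin_cases i <;> fin_cases j <;> simp
  rw [hdiag] at hE
  have hA : (!![(a : ℂ), b; (starRingEnd ℂ) b, (c : ℂ)]).IsHermitian := by
    ext i j; fin_cases i <;> fin_cases j <;> simp
  exact ⟨jtp_apply_diag_eq_of_map_single hjtp hΨ hE hA rfl,
    jtp_apply_diag_eq_of_map_single hjtp hΨ (jtp_map_single_one_one hherm hjtp h0 h1 hE) hA rfl⟩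

theorem jtp_diagonal_entries
    (Φ : Matrix (Fin 2) (Fin 2) ℂ → Matrix (Fin 2) (Fin 2) ℂ)
    (hherm : ∀ A, A.IsHermitian → (Φ A).IsHermitian)
    (hjtp : ∀ A B, A.IsHermitian → B.IsHermitian → Φ (A * B * A) = Φ A * Φ B * Φ A)
    (h0 : Φ 0 = 0) (h1 : Φ 1 = 1)
    (hnd : ∃ A : Matrix (Fin 2) (Fin 2) ℂ, A.IsHermitian ∧ A.rank = 1 ∧ Φ A ≠ 0)
    (hE : Φ (Matrix.diagonal ![(1 : ℂ), 0]) = Matrix.diagonal ![(1 : ℂ), 0])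
    (Ψ : ℝ → ℝ) (hΨmul : ∀ x y : ℝ, Ψ (x * y) = Ψ x * Ψ y)
    (hΨ : ∀ l : ℝ, Φ ((l : ℂ) • 1) = (Ψ l : ℂ) • 1) :
    ∀ (a c : ℝ) (b : ℂ),
      (Φ !![(a : ℂ), b; (starRingEnd ℂ) b, (c : ℂ)]) 0 0 = (Ψ a : ℂ) ∧
      (Φ !![(a : ℂ), b; (starRingEnd ℂ) b, (c : ℂ)]) 1 1 = (Ψ c : ℂ) :=
  jtp_diagonal_entries_general Φ hherm hjtp h0 h1 hE Ψ hΨ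
end

section
/- Define η(A) = -1 if A is negative definite and η(A) = 1 if A is invertible but not negative definite. If Φ : H₂(ℂ) → H₂(ℂ) is a J.T.P. homomorphism, then Φ'(A) := η(A)·Φ(A) for invertible A, and Φ'(A) := 0 for singular A, is also a J.T.P. homomorphism. -/
/-! Congruence `B ↦ A * B * A` by an invertible Hermitian `A` is `B ↦ A * B * star A`, which preserves
positive definiteness in both directions; hence `-(A * B * A)` is positive definite exactly when `-B`
is, i.e. `η (A * B * A) = η B`, and the signs `η A * η B * η A` collapse to `η B`. If `A` or `B` is
singular then so is `A * B * A`, and both sides vanish. -/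

open Matrix
open scoped ComplexOrder Classical

namespace Matrix

variable {n R : Type*} [Fintype n] [DecidableEq n] [CommRing R]

theorem isUnit_mul_mul_self_iff {A B : Matrix n n R} :
    IsUnit (A * B * A) ↔ IsUnit A ∧ IsUnit B := by
  simp only [isUnit_iff_isUnit_det, IsUnit.mul_iff]
  tauto

variable [PartialOrder R] [StarRing R]

theorem IsHermitian.posDef_neg_mul_mul_self_iff {A B : Matrix n n R} (hA : A.IsHermitian)
    (hAu : IsUnit A) : (-(A * B * A)).PosDef ↔ (-B).PosDef := by
  have hconj : -(A * B * A) = A * -B * star A := by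
    rw [star_eq_conjTranspose, hA.eq, mul_neg, neg_mul]
  rw [hconj, IsUnit.posDef_star_right_conjugate_iff hAu]

def IsJTPHom (Φ : Matrix n n R → Matrix n n R) : Prop :=
  ∀ A B, A.IsHermitian → B.IsHermitian → Φ (A * B * A) = Φ A * Φ B * Φ A

noncomputable def etaTwist (Φ : Matrix n n R → Matrix n n R) (A : Matrix n n R) : Matrix n n R :=
  if IsUnit A then (if (-A).PosDef then -Φ A else Φ A) else 0

theorem IsJTPHom.etaTwist {Φ : Matrix n n R → Matrix n n R} (hΦ : IsJTPHom Φ) :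
    IsJTPHom (etaTwist Φ) := by
  intro A B hA hB
  by_cases hunit : IsUnit A ∧ IsUnit B
  · obtain ⟨hAu, hBu⟩ := hunit
    simp only [Matrix.etaTwist, if_pos (isUnit_mul_mul_self_iff.2 ⟨hAu, hBu⟩), if_pos hAu,
      if_pos hBu, hA.posDef_neg_mul_mul_self_iff hAu, hΦ A B hA hB]
    split_ifs <;> simp only [neg_mul, mul_neg, neg_neg]
  · have hsing : ¬IsUnit (A * B * A) := fun h ↦ hunit (isUnit_mul_mul_self_iff.1 h)
    rw [not_and_or] at hunit
    rcases hunit with hAs | hBs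
    · simp [Matrix.etaTwist, hsing, hAs]
    · simp [Matrix.etaTwist, hsing, hBs]

end Matrix

theorem jtp_eta_twist_general
    (Φ Φ' : Matrix (Fin 2) (Fin 2) ℂ → Matrix (Fin 2) (Fin 2) ℂ)
    (hjtp : ∀ A B, A.IsHermitian → B.IsHermitian → Φ (A * B * A) = Φ A * Φ B * Φ A)
    (hΦ' : ∀ A : Matrix (Fin 2) (Fin 2) ℂ,
      Φ' A = if IsUnit A then (if (-A).PosDef then -Φ A else Φ A) else 0) :
    ∀ A B : Matrix (Fin 2) (Fin 2) ℂ, A.IsHermitian → B.IsHermitian →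
      Φ' (A * B * A) = Φ' A * Φ' B * Φ' A := by
  obtain rfl : Φ' = etaTwist Φ := funext hΦ'
  exact IsJTPHom.etaTwist hjtp

theorem jtp_eta_twist
    (Φ Φ' : Matrix (Fin 2) (Fin 2) ℂ → Matrix (Fin 2) (Fin 2) ℂ)
    (hherm : ∀ A, A.IsHermitian → (Φ A).IsHermitian)
    (hjtp : ∀ A B, A.IsHermitian → B.IsHermitian → Φ (A * B * A) = Φ A * Φ B * Φ A)
    (hΦ' : ∀ A : Matrix (Fin 2) (Fin 2) ℂ,
      Φ' A = if IsUnit A then (if (-A).PosDef then -Φ A else Φ A) else 0) :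
    ∀ A B : Matrix (Fin 2) (Fin 2) ℂ, A.IsHermitian → B.IsHermitian →
      Φ' (A * B * A) = Φ' A * Φ' B * Φ' A :=
  jtp_eta_twist_general Φ Φ' hjtp hΦ'
end

section
/- Let Φ : H₂(ℂ) → H₂(ℂ) be a J.T.P. homomorphism with Φ(0)=0, Φ(I)=I, vanishing on all matrices of rank ≤ 1, mapping scalars to scalars, and such that Φ(diag(-1,1)) = diag(-1,1) and Φ(K) has eigenvalues {-1,1} where K = [[0,1],[1,0]]. Then Φ(K) = diag(1,-1), Φ(K) = diag(-1,1), or Φ(K) = [[0,b],[conj(b),0]] for some b ∈ ℂ with |b| = 1. -/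
/-!
Since `K * K = 1`, the image `M = Φ K` is a Hermitian involution. The map fixes
`D = diag(-1, 1)`, so `Φ (D * K * D) = D * M * D`; as `D * K * D = -K`, the identity
`K * D * K = (-K) * D * (-K)` turns into `M * D * M = (D * M * D) * D * (D * M * D)`,
whose `(0, 1)` entry reads `M₀₁ (M₀₀ - M₁₁) = 0`. The spectrum `{-1, 1}` rules out
`M = ±1`, which for a `2 × 2` involution forces `tr M = 0`. A traceless Hermitian involution
with `M₀₁ (M₀₀ - M₁₁) = 0` is either `diag(±1, ∓1)` or off-diagonal with a unimodular entry.
-/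

open Matrix

theorem Matrix.trace_fin_two_eq_zero_of_mul_self_eq_one {R : Type*} [CommRing R] [IsDomain R]
    {M : Matrix (Fin 2) (Fin 2) R} (hsq : M * M = 1) (hne_one : M ≠ 1) (hne_neg_one : M ≠ -1) :
    M.trace = 0 := by
  obtain ⟨a, b, c, d, rfl⟩ : ∃ a b c d : R, M = !![a, b; c, d] :=
    ⟨_, _, _, _, M.eta_fin_two⟩
  rw [trace_fin_two_of]
  by_contra htr
  rw [mul_fin_two, one_fin_two] at hsq
  simp only [EmbeddingLike.apply_eq_iff_eq, vecCons_inj, and_true] at hsq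
  obtain ⟨⟨haa, hab⟩, hca, hdd⟩ := hsq
  obtain rfl : b = 0 := (mul_eq_zero.mp (by linear_combination hab)).resolve_right htr
  obtain rfl : c = 0 := (mul_eq_zero.mp (by linear_combination hca)).resolve_right htr
  obtain rfl : d = a := by
    have : (a + d) * (d - a) = 0 := by linear_combination hdd - haa
    exact sub_eq_zero.mp ((mul_eq_zero.mp this).resolve_left htr)
  rcases mul_self_eq_one_iff.mp (by simpa using haa : d * d = 1) with rfl | rfl
  · exact hne_one (by simp [one_fin_two])
  · exact hne_neg_one (by simp [one_fin_two])

theorem Matrix.fin_two_mul_sub_eq_zero_of_mul_diagonal_mul_eq {R : Type*} [CommRing R]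
    [NoZeroDivisors R] [NeZero (2 : R)] {M : Matrix (Fin 2) (Fin 2) R}
    (h : M * diagonal ![-1, 1] * M =
      diagonal ![-1, 1] * M * diagonal ![-1, 1] * diagonal ![-1, 1] *
        (diagonal ![-1, 1] * M * diagonal ![-1, 1])) :
    M 0 1 * (M 0 0 - M 1 1) = 0 := by
  have h01 : -(M 0 0 * M 0 1) + M 0 1 * M 1 1 = -(M 0 1 * M 1 1) + M 0 0 * M 0 1 := by
    simpa [mul_apply, Fin.sum_univ_two, diagonal_apply] using congrFun₂ h 0 1
  have : (2 : R) * (M 0 1 * (M 0 0 - M 1 1)) = 0 := by linear_combination -h01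
  exact (mul_eq_zero.mp this).resolve_left two_ne_zero

theorem Matrix.IsHermitian.fin_two_involution_cases {M : Matrix (Fin 2) (Fin 2) ℂ}
    (hM : M.IsHermitian) (hsq : M * M = 1) (htr : M.trace = 0)
    (hcomm : M 0 1 * (M 0 0 - M 1 1) = 0) :
    M = diagonal ![1, -1] ∨ M = diagonal ![-1, 1] ∨
      ∃ b : ℂ, ‖b‖ = 1 ∧ M = !![0, b; starRingEnd ℂ b, 0] := by
  obtain ⟨a, b, c, d, rfl⟩ : ∃ a b c d : ℂ, M = !![a, b; c, d] :=
    ⟨_, _, _, _, M.eta_fin_two⟩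
  obtain rfl : c = starRingEnd ℂ b := by simpa using (congrFun₂ hM 1 0).symm
  obtain rfl : d = -a := by rw [trace_fin_two_of] at htr; linear_combination htr
  have haa : a * a + b * starRingEnd ℂ b = 1 := by simpa using congrFun₂ hsq 0 0
  obtain rfl | rfl : b = 0 ∨ a = 0 := by simpa using hcomm
  · rcases mul_self_eq_one_iff.mp (by simpa using haa : a * a = 1) with rfl | rfl
    · left; ext i j; fin_cases i <;> fin_cases j <;> simp
    · right; left; ext i j; fin_cases i <;> fin_cases j <;> simp
  · refine Or.inr (Or.inr ⟨b, ?_, by simp⟩)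
    have hbb := congrArg norm (by linear_combination haa : b * starRingEnd ℂ b = 1)
    rw [norm_mul, Complex.norm_conj, norm_one] at hbb
    exact (mul_self_eq_one_iff.mp hbb).resolve_right (by linarith [norm_nonneg b])

theorem jtp_mul_self_eq_one_of_mul_self_eq_one {n : Type*} [Fintype n] [DecidableEq n]
    {Φ : Matrix n n ℂ → Matrix n n ℂ}
    (hjtp : ∀ A B, A.IsHermitian → B.IsHermitian → Φ (A * B * A) = Φ A * Φ B * Φ A)
    (h1 : Φ 1 = 1) {A : Matrix n n ℂ} (hA : A.IsHermitian) (hsq : A * A = 1) :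
    Φ A * Φ A = 1 := by
  simpa [h1, hsq] using (hjtp A 1 hA isHermitian_one).symm

theorem jtp_image_of_K_general
    (Φ : Matrix (Fin 2) (Fin 2) ℂ → Matrix (Fin 2) (Fin 2) ℂ)
    (hherm : ∀ A, A.IsHermitian → (Φ A).IsHermitian)
    (hjtp : ∀ A B, A.IsHermitian → B.IsHermitian → Φ (A * B * A) = Φ A * Φ B * Φ A)
    (h1 : Φ 1 = 1)
    (hD : Φ (Matrix.diagonal ![(-1 : ℂ), 1]) = Matrix.diagonal ![(-1 : ℂ), 1])
    (hK : spectrum ℂ (Φ !![(0 : ℂ), 1; 1, 0]) = {-1, 1}) :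
    Φ !![(0 : ℂ), 1; 1, 0] = Matrix.diagonal ![(1 : ℂ), -1] ∨
    Φ !![(0 : ℂ), 1; 1, 0] = Matrix.diagonal ![(-1 : ℂ), 1] ∨
    ∃ b : ℂ, ‖b‖ = 1 ∧ Φ !![(0 : ℂ), 1; 1, 0] = !![0, b; (starRingEnd ℂ) b, 0] := by
  set K : Matrix (Fin 2) (Fin 2) ℂ := !![0, 1; 1, 0]
  set D : Matrix (Fin 2) (Fin 2) ℂ := diagonal ![-1, 1]
  have hK_herm : K.IsHermitian := by ext i j; fin_cases i <;> fin_cases j <;> simp [K]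
  have hD_herm : D.IsHermitian :=
    isHermitian_diagonal_of_self_adjoint _ (by ext i; fin_cases i <;> simp)
  have hDKD_herm : (D * K * D).IsHermitian := by
    simpa [hD_herm.eq] using isHermitian_mul_mul_conjTranspose D hK_herm
  have hsq : Φ K * Φ K = 1 := jtp_mul_self_eq_one_of_mul_self_eq_one hjtp h1 hK_herm (by
    ext i j; fin_cases i <;> fin_cases j <;> simp [K, mul_apply, Fin.sum_univ_two])
  have hrel : Φ K * D * Φ K = D * Φ K * D * D * (D * Φ K * D) := calc
    Φ K * D * Φ K = Φ (K * D * K) := by rw [hjtp K D hK_herm hD_herm, hD]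
    _ = Φ ((D * K * D) * D * (D * K * D)) := by
      congr 1
      ext i j
      fin_cases i <;> fin_cases j <;> simp [K, D, mul_apply, Fin.sum_univ_two, vecMul_diagonal]
    _ = D * Φ K * D * D * (D * Φ K * D) := by
      rw [hjtp _ D hDKD_herm hD_herm, hjtp D K hD_herm hK_herm, hD]
  have hne_one : Φ K ≠ 1 := fun h => by
    have : (-1 : ℂ) ∈ spectrum ℂ (Φ K) := by simp [K, hK]
    rw [h, spectrum.one_eq] at this; norm_num at this
  have hne_neg_one : Φ K ≠ -1 := fun h => by
    have : (1 : ℂ) ∈ spectrum ℂ (Φ K) := by simp [K, hK]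
    rw [h, ← spectrum.neg_eq, spectrum.one_eq] at this; norm_num at this
  exact (hherm K hK_herm).fin_two_involution_cases hsq
    (trace_fin_two_eq_zero_of_mul_self_eq_one hsq hne_one hne_neg_one)
    (fin_two_mul_sub_eq_zero_of_mul_diagonal_mul_eq hrel)

theorem jtp_image_of_K
    (Φ : Matrix (Fin 2) (Fin 2) ℂ → Matrix (Fin 2) (Fin 2) ℂ)
    (hherm : ∀ A, A.IsHermitian → (Φ A).IsHermitian)
    (hjtp : ∀ A B, A.IsHermitian → B.IsHermitian → Φ (A * B * A) = Φ A * Φ B * Φ A)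
    (h0 : Φ 0 = 0) (h1 : Φ 1 = 1)
    (hdeg : ∀ A : Matrix (Fin 2) (Fin 2) ℂ, A.IsHermitian → A.rank ≤ 1 → Φ A = 0)
    (hscal : ∀ l : ℝ, ∃ m : ℝ, Φ ((l : ℂ) • 1) = (m : ℂ) • 1)
    (hD : Φ (Matrix.diagonal ![(-1 : ℂ), 1]) = Matrix.diagonal ![(-1 : ℂ), 1])
    (hK : spectrum ℂ (Φ !![(0 : ℂ), 1; 1, 0]) = {-1, 1}) :
    Φ !![(0 : ℂ), 1; 1, 0] = Matrix.diagonal ![(1 : ℂ), -1] ∨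
    Φ !![(0 : ℂ), 1; 1, 0] = Matrix.diagonal ![(-1 : ℂ), 1] ∨
    ∃ b : ℂ, ‖b‖ = 1 ∧ Φ !![(0 : ℂ), 1; 1, 0] = !![0, b; (starRingEnd ℂ) b, 0] :=
  jtp_image_of_K_general Φ hherm hjtp h1 hD hK
end

section
/- Let γ : (0,∞) → (0,∞) be a multiplicative function of the form γ(x) = x^c for some real constant c, satisfying the functional equation γ((x-1+√(2x²+2))/(x+1)) = (γ(x)-1+√(2γ(x)²+2))/(γ(x)+1) for all x > 0, and γ not identically 1. Then c = 1 or c = -1. -/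
/-!
Put `Φ x = (x - 1 + √(2x² + 2)) / (x + 1)`. The functional equation says `Φ (x ^ c) = Φ x ^ c`,
so `h t = log (Φ (exp t))` satisfies `h (c t) = c h t`. If `c ≠ 0` and `|c| ≠ 1`, iterating this
with `c` or `c⁻¹` sends any `t ≠ 0` to `0` along a sequence on which the slope `h t / t` does not
change, so `h t = h'(0) t = t / 2` for every `t`. This fails at `t = log 7`, since `Φ 7 = 2`.
-/

open Real Filter Topology

lemma eq_mul_of_hasDerivAt_zero_of_apply_mul_of_norm_lt_one {𝕜 : Type*}
    [NontriviallyNormedField 𝕜] {h : 𝕜 → 𝕜} {a d : 𝕜}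
    (hh : HasDerivAt h a 0) (hd0 : d ≠ 0) (hd1 : ‖d‖ < 1) (hhom : ∀ t, h (d * t) = d * h t)
    (t : 𝕜) : h t = a * t := by
  have h0 : h 0 = 0 := by
    have hd1' : 1 - d ≠ 0 := by
      rw [sub_ne_zero]; rintro rfl; simp at hd1
    have h00 : (1 - d) * h 0 = 0 := by
      have := hhom 0
      rw [mul_zero] at this
      linear_combination this
    exact (mul_eq_zero.mp h00).resolve_left hd1'
  rcases eq_or_ne t 0 with rfl | ht
  · rw [h0, mul_zero]
  have hiter : ∀ n : ℕ, h (d ^ n * t) = d ^ n * h t := by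
    intro n
    induction n with
    | zero => simp
    | succ n ih => rw [pow_succ', mul_assoc, hhom, ih, mul_assoc]
  have hs : Tendsto (fun n : ℕ => d ^ n * t) atTop (𝓝[≠] 0) := by
    refine tendsto_nhdsWithin_of_tendsto_nhds_of_eventually_within _ ?_
      (Eventually.of_forall fun n => mul_ne_zero (pow_ne_zero n hd0) ht)
    simpa using (tendsto_pow_atTop_nhds_zero_of_norm_lt_one hd1).mul_const t
  have hslope : ∀ n : ℕ, slope h 0 (d ^ n * t) = h t / t := by
    intro n
    rw [slope_def_field, hiter, h0, sub_zero, sub_zero, mul_div_mul_left _ _ (pow_ne_zero n hd0)]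
  have hlim : Tendsto (fun _ : ℕ => h t / t) atTop (𝓝 a) :=
    ((hasDerivAt_iff_tendsto_slope.mp hh).comp hs).congr hslope
  rw [← tendsto_nhds_unique tendsto_const_nhds hlim, div_mul_cancel₀ _ ht]

lemma eq_mul_of_hasDerivAt_zero_of_apply_mul {𝕜 : Type*} [NontriviallyNormedField 𝕜]
    {h : 𝕜 → 𝕜} {a c : 𝕜} (hh : HasDerivAt h a 0) (hc0 : c ≠ 0) (hc1 : ‖c‖ ≠ 1)
    (hhom : ∀ t, h (c * t) = c * h t) (t : 𝕜) : h t = a * t := by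
  rcases hc1.lt_or_gt with hlt | hgt
  · exact eq_mul_of_hasDerivAt_zero_of_apply_mul_of_norm_lt_one hh hc0 hlt hhom t
  · refine eq_mul_of_hasDerivAt_zero_of_apply_mul_of_norm_lt_one hh (inv_ne_zero hc0)
      (by rw [norm_inv]; exact inv_lt_one_of_one_lt₀ hgt) (fun s => ?_) t
    rw [eq_inv_mul_iff_mul_eq₀ hc0, ← hhom, mul_inv_cancel_left₀ hc0]

noncomputable def Φ (x : ℝ) : ℝ := (x - 1 + √(2 * x ^ 2 + 2)) / (x + 1)

lemma Φ_pos {x : ℝ} (hx : 0 < x) : 0 < Φ x := by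
  have hsqrt : 1 < √(2 * x ^ 2 + 2) := by
    rw [lt_sqrt zero_le_one]; nlinarith
  exact div_pos (by linarith) (by linarith)

lemma Φ_one : Φ 1 = 1 := by
  rw [Φ, show (2 : ℝ) * 1 ^ 2 + 2 = 2 ^ 2 by norm_num, sqrt_sq zero_le_two]
  norm_num

lemma Φ_seven : Φ 7 = 2 := by
  rw [Φ, show (2 : ℝ) * 7 ^ 2 + 2 = 10 ^ 2 by norm_num, sqrt_sq (by norm_num)]
  norm_num

lemma hasDerivAt_Φ_one : HasDerivAt Φ (1 / 2) 1 := by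
  have hsqrt4 : √(2 * 1 ^ 2 + 2 : ℝ) = 2 := by
    rw [show (2 : ℝ) * 1 ^ 2 + 2 = 2 ^ 2 by norm_num, sqrt_sq zero_le_two]
  have hrad : HasDerivAt (fun x : ℝ => 2 * x ^ 2 + 2) 4 1 :=
    (((hasDerivAt_pow 2 (1 : ℝ)).const_mul 2).add_const 2).congr_deriv (by norm_num)
  have hnum : HasDerivAt (fun x : ℝ => x - 1 + √(2 * x ^ 2 + 2)) 2 1 := by
    have := ((hasDerivAt_id' (1 : ℝ)).sub_const 1).add (hrad.sqrt (by norm_num))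
    rw [hsqrt4] at this
    exact this.congr_deriv (by norm_num)
  have := hnum.div ((hasDerivAt_id' (1 : ℝ)).add_const 1) (by norm_num)
  rw [hsqrt4] at this
  exact this.congr_deriv (by norm_num)

lemma hasDerivAt_log_Φ_exp_zero : HasDerivAt (fun t => log (Φ (exp t))) (1 / 2) 0 := by
  have hΦ : HasDerivAt Φ (1 / 2) (exp 0) := by rw [exp_zero]; exact hasDerivAt_Φ_one
  have := (hΦ.comp 0 (hasDerivAt_exp 0)).log (by rw [Function.comp_apply, exp_zero, Φ_one]; norm_num)
  simpa [Φ_one] using this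

theorem power_solution_of_functional_equation
    (γ : ℝ → ℝ) (c : ℝ)
    (hpow : ∀ x : ℝ, 0 < x → γ x = x ^ c)
    (hfe : ∀ x : ℝ, 0 < x →
      γ ((x - 1 + Real.sqrt (2 * x ^ 2 + 2)) / (x + 1)) =
        (γ x - 1 + Real.sqrt (2 * γ x ^ 2 + 2)) / (γ x + 1))
    (hne : ¬ ∀ x : ℝ, 0 < x → γ x = 1) :
    c = 1 ∨ c = -1 := by
  have hc0 : c ≠ 0 := by
    rintro rfl
    exact hne fun x hx => by rw [hpow x hx, rpow_zero]
  have hΦ : ∀ x, 0 < x → Φ x ^ c = Φ (x ^ c) := fun x hx => by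
    have h := (hpow _ (Φ_pos hx)).symm.trans (hfe x hx)
    rwa [hpow x hx] at h
  have hhom : ∀ t, log (Φ (exp (c * t))) = c * log (Φ (exp t)) := fun t => by
    rw [← log_rpow (Φ_pos (exp_pos t)), hΦ _ (exp_pos t), ← exp_mul, mul_comm]
  by_contra! hc1
  have hlog7 := eq_mul_of_hasDerivAt_zero_of_apply_mul hasDerivAt_log_Φ_exp_zero hc0
    (fun h => (abs_eq zero_le_one).mp h |>.elim hc1.1 hc1.2) hhom (log 7)
  rw [exp_log (by norm_num), Φ_seven] at hlog7
  have hlog : log 4 = log 7 := by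
    rw [show (4 : ℝ) = 2 ^ 2 by norm_num, log_pow]; push_cast; linarith
  exact absurd (log_injOn_pos (by norm_num) (by norm_num) hlog) (by norm_num)
end

section
/- Let λ : Γ → Γ be a map on the unit circle Γ = {z ∈ ℂ : |z| = 1} with λ(1) = 1, satisfying λ(x)·λ(conj(y))·λ(x) = λ(x²·conj(y)) for all x, y ∈ Γ. Then λ is multiplicative (λ(xy) = λ(x)λ(y)) and λ(conj(x)) = conj(λ(x)) for all x, y ∈ Γ. -/
/-! Putting `y = conj z` turns the hypothesis into the Jordan-type identity
`λ(x) λ(z) λ(x) = λ(x² z)`. With `z = 1` it gives `λ(x²) = λ(x)²`, and since every point of the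
circle is a square `w²` of another one, `λ(w² y) = λ(w)² λ(y) = λ(w²) λ(y)`. Multiplicativity then
gives `λ(x) λ(x⁻¹) = 1`, and on the circle both inverses are conjugates. -/

section JordanIdentity

variable {M N : Type*} [Monoid M] [CommMonoid N] {S : Set M} {l : M → N}

theorem map_sq_of_map_mul_mul_self (hS : 1 ∈ S) (h1 : l 1 = 1)
    (h : ∀ x ∈ S, ∀ z ∈ S, l x * l z * l x = l (x ^ 2 * z)) {x : M} (hx : x ∈ S) :
    l (x ^ 2) = l x ^ 2 := by
  simpa [h1, sq] using (h x hx 1 hS).symm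

theorem map_mul_of_map_mul_mul_self (hS : 1 ∈ S) (hsqrt : ∀ x ∈ S, ∃ w ∈ S, w ^ 2 = x)
    (h1 : l 1 = 1) (h : ∀ x ∈ S, ∀ z ∈ S, l x * l z * l x = l (x ^ 2 * z))
    {x y : M} (hx : x ∈ S) (hy : y ∈ S) : l (x * y) = l x * l y := by
  obtain ⟨w, hw, rfl⟩ := hsqrt x hx
  calc l (w ^ 2 * y) = l w * l y * l w := (h w hw y hy).symm
    _ = l w ^ 2 * l y := by rw [mul_right_comm, sq]
    _ = l (w ^ 2) * l y := by rw [map_sq_of_map_mul_mul_self hS h1 h hw]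

end JordanIdentity

namespace Complex

open ComplexConjugate

theorem exists_sq_eq_of_norm_eq_one {x : ℂ} (hx : ‖x‖ = 1) : ∃ w : ℂ, ‖w‖ = 1 ∧ w ^ 2 = x := by
  obtain ⟨w, rfl⟩ := IsAlgClosed.exists_pow_nat_eq x two_pos
  refine ⟨w, ?_, rfl⟩
  rw [norm_pow, pow_eq_one_iff_of_nonneg (norm_nonneg w) two_ne_zero] at hx
  exact hx

theorem map_conj_of_map_mul {l : ℂ → ℂ} (hmaps : ∀ x : ℂ, ‖x‖ = 1 → ‖l x‖ = 1) (h1 : l 1 = 1)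
    (hmul : ∀ x y : ℂ, ‖x‖ = 1 → ‖y‖ = 1 → l (x * y) = l x * l y) {x : ℂ} (hx : ‖x‖ = 1) :
    l (conj x) = conj (l x) := by
  have hx' : ‖x⁻¹‖ = 1 := by rw [norm_inv, hx, inv_one]
  have hinv : l x * l x⁻¹ = 1 := by
    rw [← hmul x _ hx hx', mul_inv_cancel₀ (norm_ne_zero_iff.mp (hx ▸ one_ne_zero)), h1]
  rw [← inv_eq_conj hx, ← inv_eq_conj (hmaps x hx)]
  exact eq_inv_of_mul_eq_one_right hinv

end Complex

theorem circle_map_multiplicative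
    (l : ℂ → ℂ)
    (hmaps : ∀ x : ℂ, ‖x‖ = 1 → ‖l x‖ = 1)
    (h1 : l 1 = 1)
    (heq : ∀ x y : ℂ, ‖x‖ = 1 → ‖y‖ = 1 →
      l x * l ((starRingEnd ℂ) y) * l x = l (x ^ 2 * (starRingEnd ℂ) y)) :
    (∀ x y : ℂ, ‖x‖ = 1 → ‖y‖ = 1 → l (x * y) = l x * l y) ∧
    (∀ x : ℂ, ‖x‖ = 1 → l ((starRingEnd ℂ) x) = (starRingEnd ℂ) (l x)) := by
  have hjordan : ∀ x : ℂ, ‖x‖ = 1 → ∀ z : ℂ, ‖z‖ = 1 → l x * l z * l x = l (x ^ 2 * z) := by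
    intro x hx z hz
    simpa using heq x (starRingEnd ℂ z) hx (by rwa [Complex.norm_conj])
  have hmul : ∀ x y : ℂ, ‖x‖ = 1 → ‖y‖ = 1 → l (x * y) = l x * l y := fun x y hx hy =>
    map_mul_of_map_mul_mul_self (S := {x : ℂ | ‖x‖ = 1}) norm_one
      (fun x hx => by simpa using Complex.exists_sq_eq_of_norm_eq_one hx) h1 hjordan hx hy
  exact ⟨hmul, fun x hx => Complex.map_conj_of_map_mul hmaps h1 hmul hx⟩
end

section
/- Let Φ : H₂(ℂ) → ℝ be a J.T.P. homomorphism with Φ(I) = 1 and Φ(0) = 0. Then Φ(A) = 0 for every A ∈ H₂(ℂ) with rank A < 2. -/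
open Matrix Complex ComplexConjugate

/-!
Write `B = adj A`. A singular Hermitian `2 × 2` matrix `A` satisfies `A B = det A • 1 = 0`, and
`A`, `B` are swapped by conjugation with a Hermitian involution `U`: in Pauli coordinates `B` is
`A` with its traceless part negated, and `U` is a reflection anticommuting with that part. Hence
`Φ B = Φ U ^ 2 Φ A`, `Φ A = Φ U ^ 2 Φ B`, and `0 = Φ (A B A) = Φ U ^ 2 Φ A ^ 3` forces `Φ A = 0`.
-/

/-- `Φ` is a Jordan triple product homomorphism on `S`. -/
def IsJTPOn {R M : Type*} [Mul R] [Mul M] (S : Set R) (Φ : R → M) : Prop :=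
  ∀ A ∈ S, ∀ B ∈ S, Φ (A * B * A) = Φ A * Φ B * Φ A

theorem IsJTPOn.apply_eq_zero_of_conj_swap {R M : Type*} [MulZeroClass R] [CommSemiring M]
    [NoZeroDivisors M] {S : Set R} {Φ : R → M} (hΦ : IsJTPOn S Φ) (h0 : Φ 0 = 0)
    {A B U : R} (hA : A ∈ S) (hB : B ∈ S) (hU : U ∈ S) (hAB : A * B = 0)
    (hUAU : U * A * U = B) (hUBU : U * B * U = A) : Φ A = 0 := by
  have hΦB : Φ B = Φ U ^ 2 * Φ A := by rw [← hUAU, hΦ U hU A hA]; ring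
  have hΦA : Φ A = Φ U ^ 2 * Φ B := by rw [← hUBU, hΦ U hU B hB]; ring
  have hABA : Φ U ^ 2 * Φ A ^ 3 = 0 := by
    have h := hΦ A hA B hB
    rw [hAB, zero_mul, h0, hΦB] at h
    rw [h]; ring
  rcases mul_eq_zero.mp hABA with hΦU | hΦA3
  · rw [hΦA, hΦU, zero_mul]
  · exact pow_eq_zero_iff three_ne_zero |>.mp hΦA3

theorem Matrix.det_eq_zero_of_rank_lt_card {n K : Type*} [Fintype n] [DecidableEq n] [Field K]
    {A : Matrix n n K} (h : A.rank < Fintype.card n) : A.det = 0 := by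
  contrapose! h
  rw [A.rank_of_isUnit ((isUnit_iff_isUnit_det A).mpr h.isUnit)]

theorem Complex.exists_mul_conj_eq_one_and_sq_mul_conj_eq_neg (b : ℂ) :
    ∃ u : ℂ, u * conj u = 1 ∧ u ^ 2 * conj b = -b := by
  set e := exp (arg b * I)
  have he : e * conj e = 1 := by
    rw [mul_conj', norm_exp_ofReal_mul_I]; norm_num
  have hb : b = ‖b‖ * e := (norm_mul_exp_arg_mul_I b).symm
  refine ⟨I * e, ?_, ?_⟩
  · rw [map_mul, conj_I]; linear_combination he - e * conj e * I_sq
  · rw [hb, map_mul, conj_ofReal]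
    linear_combination (-(‖b‖ : ℂ) * e) * he + ↑‖b‖ * e ^ 2 * conj e * I_sq

theorem Matrix.IsHermitian.exists_isHermitian_involution_conj_eq_adjugate
    {A : Matrix (Fin 2) (Fin 2) ℂ} (hA : A.IsHermitian) :
    ∃ U : Matrix (Fin 2) (Fin 2) ℂ, U.IsHermitian ∧ U * U = 1 ∧ U * A * U = A.adjugate := by
  obtain ⟨u, hu, hub⟩ := exists_mul_conj_eq_one_and_sq_mul_conj_eq_neg (A 0 1)
  have hub' : conj u ^ 2 * A 0 1 = -conj (A 0 1) := by simpa using congrArg conj hub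
  have h10 : A 1 0 = conj (A 0 1) := (hA.apply 1 0).symm
  refine ⟨!![0, u; conj u, 0], ?_, ?_, ?_⟩
  · ext i j; fin_cases i <;> fin_cases j <;> simp
  · rw [mul_fin_two, one_fin_two]; simp [mul_comm _ u, hu]
  · rw [eta_fin_two A, h10, mul_fin_two, mul_fin_two, adjugate_fin_two_of]
    simp only [zero_mul, zero_add, mul_zero, add_zero, EmbeddingLike.apply_eq_iff_eq,
      vecCons_inj, and_true]
    exact ⟨⟨by linear_combination A 1 1 * hu, by linear_combination hub⟩,
      by linear_combination hub', by linear_combination A 0 0 * hu⟩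

theorem jtp_to_real_rank_lt_two_general
    (Φ : Matrix (Fin 2) (Fin 2) ℂ → ℝ)
    (hjtp : ∀ A B : Matrix (Fin 2) (Fin 2) ℂ, A.IsHermitian → B.IsHermitian →
      Φ (A * B * A) = Φ A * Φ B * Φ A)
    (h0 : Φ 0 = 0) :
    ∀ A : Matrix (Fin 2) (Fin 2) ℂ, A.IsHermitian → A.rank < 2 → Φ A = 0 := by
  intro A hA hrank
  have hdet : A.det = 0 := det_eq_zero_of_rank_lt_card (by simpa using hrank)
  obtain ⟨U, hU, hUU, hUAU⟩ := hA.exists_isHermitian_involution_conj_eq_adjugate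
  have hΦ : IsJTPOn {A : Matrix (Fin 2) (Fin 2) ℂ | A.IsHermitian} Φ :=
    fun A hA B hB => hjtp A B hA hB
  refine hΦ.apply_eq_zero_of_conj_swap h0 hA hA.adjugate hU ?_ hUAU ?_
  · rw [mul_adjugate, hdet, zero_smul]
  · rw [← hUAU, ← mul_assoc, ← mul_assoc, hUU, one_mul, mul_assoc, hUU, mul_one]

theorem jtp_to_real_rank_lt_two
    (Φ : Matrix (Fin 2) (Fin 2) ℂ → ℝ)
    (hjtp : ∀ A B : Matrix (Fin 2) (Fin 2) ℂ, A.IsHermitian → B.IsHermitian →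
      Φ (A * B * A) = Φ A * Φ B * Φ A)
    (h1 : Φ 1 = 1) (h0 : Φ 0 = 0) :
    ∀ A : Matrix (Fin 2) (Fin 2) ℂ, A.IsHermitian → A.rank < 2 → Φ A = 0 :=
  jtp_to_real_rank_lt_two_general Φ hjtp h0
end
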